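/- arXiv:2203.06101 — 9 statements merged into one kernel-verified Lean document; each statement's English description precedes it below -/
import Mathlib

section
/- For all integers a ≥ 1 and n ≥ 3 with gcd(a, F_n) = 1, the least positive multiplicative inverse of a modulo F_n equals (b·F_n + 1)/a, where r = n mod π(a) (π(a) the Pisano period of a), and b is the unique element of {0,...,a-1} with b·F_r ≡ -1 (mod a). -/
/-- The Pisano period of `a`: the least positive `k` such that the Fibonacci
sequence is periodic modulo `a` with period `k`. -/
noncomputable def pisano (a : ℕ) : ℕ :=
  sInf {k | 0 < k ∧ ∀ n, Nat.fib (n + k) % a = Nat.fib n % a}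

/-- The least positive multiplicative inverse of `a` modulo `m`. -/
noncomputable def invMod (a m : ℕ) : ℕ :=
  sInf {b | 0 < b ∧ a * b % m = 1 % m}

/-! Since `a * c = b * F_n + 1` with `b < a`, the number `c = (b * F_n + 1) / a` lies in
`(0, F_n]` and is an inverse of `a` modulo `F_n`; inverses being unique modulo `F_n`, it is
the least positive one. The residue `F_n mod a` only depends on `n mod π(a)`, which is why
`b` may be computed from `F_r`. -/

open Nat

theorem fib_modEq_fib_mod_pisano (a n : ℕ) : fib n ≡ fib (n % pisano a) [MOD a] := by
  by_cases hne : {k | 0 < k ∧ ∀ n, fib (n + k) % a = fib n % a}.Nonempty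
  · have hper : Function.Periodic (fun n ↦ fib n % a) (pisano a) :=
      fun n ↦ (Nat.sInf_mem hne).2 n
    exact (hper.map_mod_nat n).symm
  -- Without a period, `pisano a = sInf ∅ = 0` and `n % 0 = n`.
  · rw [pisano, Set.not_nonempty_iff_eq_empty.mp hne, Nat.sInf_empty, Nat.mod_zero]

theorem invMod_eq_of_modEq {a m c : ℕ} (hcop : Coprime a m) (hc : 0 < c) (hcm : c ≤ m)
    (hac : a * c ≡ 1 [MOD m]) : invMod a m = c := by
  have hmem : c ∈ {x | 0 < x ∧ a * x % m = 1 % m} := ⟨hc, hac⟩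
  obtain ⟨hd, had⟩ : 0 < invMod a m ∧ a * invMod a m ≡ 1 [MOD m] :=
    Nat.sInf_mem ⟨c, hmem⟩
  have hdc : invMod a m ≤ c := Nat.sInf_le hmem
  have hcd : c ≡ invMod a m [MOD m] :=
    Nat.ModEq.cancel_left_of_coprime hcop.symm (hac.trans had.symm)
  exact le_antisymm hdc (hcd.le_of_lt_add (by omega))

theorem stmt0_general (a n : ℕ) (hn : 3 ≤ n)
    (h : Nat.gcd a (Nat.fib n) = 1)
    (b : ℕ) (hb : b < a)
    (hbr : (b * Nat.fib (n % pisano a) + 1) % a = 0) :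
    invMod a (Nat.fib n) = (b * Nat.fib n + 1) / a := by
  have hF : 0 < fib n := fib_pos.mpr (by omega)
  obtain ⟨c, hc⟩ : a ∣ b * fib n + 1 := by
    refine Nat.dvd_of_mod_eq_zero (Eq.trans ?_ hbr)
    exact ((fib_modEq_fib_mod_pisano a n).mul_left b).add_right 1
  rw [hc, Nat.mul_div_cancel_left _ (by omega)]
  refine invMod_eq_of_modEq h ?_ ?_ ?_
  · exact Nat.pos_of_ne_zero (by rintro rfl; omega)
  · by_contra! hcF
    nlinarith
  · simp [← hc, Nat.ModEq]

theorem stmt0 (a n : ℕ) (ha : 1 ≤ a) (hn : 3 ≤ n)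
    (h : Nat.gcd a (Nat.fib n) = 1)
    (b : ℕ) (hb : b < a)
    (hbr : (b * Nat.fib (n % pisano a) + 1) % a = 0) :
    invMod a (Nat.fib n) = (b * Nat.fib n + 1) / a :=
  stmt0_general a n hn h b hb hbr
end

section
/- Let (d_i)_{i≥1} be a sequence with values in {0,1} such that d_i·d_{i+1} = 0 for all i, and which is not ultimately equal to the periodic pattern 0,1,0,1,.... Then the sum ∑_{i=1}^∞ d_i·φ^{-i} lies in the half-open interval [0, 1). -/
/-!
Write `ρ = φ⁻¹`, so that `ρ ^ n = ρ ^ (n + 1) + ρ ^ (n + 2)`. By induction, a `0/1` word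
without two consecutive ones satisfies `∑_{i ≤ n} dᵢ ρ^i ≤ 1 - ρ^(n+1)`: a final one is preceded
by a zero, and `1 - ρ^(n-1) + ρ^n = 1 - ρ^(n+1)`. Hence every such series is at most `1`. If
`d (m+1) = d (m+2) = 0`, splitting the series there bounds it by
`(1 - ρ^(m+1)) + ρ^(m+2) · 1 < 1`.
-/

open Real goldenRatio

lemma inv_goldenRatio_pos : 0 < φ⁻¹ := inv_pos.2 goldenRatio_pos

lemma inv_goldenRatio_lt_one : φ⁻¹ < 1 := inv_lt_one_of_one_lt₀ one_lt_goldenRatio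

lemma inv_goldenRatio_pow_eq_add (n : ℕ) : φ⁻¹ ^ n = φ⁻¹ ^ (n + 1) + φ⁻¹ ^ (n + 2) := by
  have hsum : φ⁻¹ + φ⁻¹ ^ 2 = 1 := by
    rw [inv_goldenRatio, neg_sq, goldenConj_sq]
    ring
  calc φ⁻¹ ^ n = φ⁻¹ ^ n * (φ⁻¹ + φ⁻¹ ^ 2) := by rw [hsum, mul_one]
    _ = φ⁻¹ ^ (n + 1) + φ⁻¹ ^ (n + 2) := by ring

lemma sum_range_digits_le_one_sub (d : ℕ → ℕ) (h01 : ∀ i, d i ≤ 1)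
    (hnc : ∀ i, 1 ≤ i → d i * d (i + 1) = 0) (n : ℕ) :
    ∑ j ∈ Finset.range n, (d (j + 1) : ℝ) * φ⁻¹ ^ (j + 1) ≤ 1 - φ⁻¹ ^ (n + 1) := by
  induction n using Nat.twoStepInduction with
  | zero => simpa using inv_goldenRatio_lt_one.le
  | one =>
    have hd : (d 1 : ℝ) ≤ 1 := by exact_mod_cast h01 1
    have hρ := inv_goldenRatio_pow_eq_add 0
    simp only [Finset.sum_range_one, pow_zero] at hρ ⊢
    nlinarith [inv_goldenRatio_pos]
  | more n ih₀ ih₁ =>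
    replace ih₁ : _ ≤ 1 - φ⁻¹ ^ (n + 2) := ih₁
    show _ ≤ 1 - φ⁻¹ ^ (n + 3)
    have hρ : φ⁻¹ ^ (n + 1) = φ⁻¹ ^ (n + 2) + φ⁻¹ ^ (n + 3) := inv_goldenRatio_pow_eq_add (n + 1)
    rw [Finset.sum_range_succ]
    rcases (show d (n + 2) = 0 ∨ d (n + 2) = 1 by have := h01 (n + 2); omega) with h | h
    · have hanti : φ⁻¹ ^ (n + 3) ≤ φ⁻¹ ^ (n + 2) := pow_le_pow_of_le_one
        inv_goldenRatio_pos.le inv_goldenRatio_lt_one.le (by omega)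
      simp only [h, Nat.cast_zero, zero_mul, add_zero]
      linarith
    · have h' : d (n + 1) = 0 := by simpa [h] using hnc (n + 1) (by omega)
      rw [Finset.sum_range_succ]
      simp only [h, h', Nat.cast_zero, Nat.cast_one, zero_mul, one_mul, add_zero]
      linarith

lemma summable_digits (d : ℕ → ℕ) (h01 : ∀ i, d i ≤ 1) :
    Summable fun j : ℕ => (d (j + 1) : ℝ) * φ⁻¹ ^ (j + 1) := by
  have hgeom : Summable fun j : ℕ => φ⁻¹ ^ (j + 1) :=
    (summable_nat_add_iff 1).2
      (summable_geometric_of_lt_one inv_goldenRatio_pos.le inv_goldenRatio_lt_one)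
  refine hgeom.of_nonneg_of_le (fun j => by have := inv_goldenRatio_pos; positivity) fun j => ?_
  exact mul_le_of_le_one_left (pow_nonneg inv_goldenRatio_pos.le _) (by exact_mod_cast h01 (j + 1))

lemma tsum_digits_le_one (d : ℕ → ℕ) (h01 : ∀ i, d i ≤ 1)
    (hnc : ∀ i, 1 ≤ i → d i * d (i + 1) = 0) :
    ∑' j : ℕ, (d (j + 1) : ℝ) * φ⁻¹ ^ (j + 1) ≤ 1 := by
  have hρ₀ := inv_goldenRatio_pos
  refine Real.tsum_le_of_sum_range_le (fun j => by positivity) fun n => ?_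
  linarith [sum_range_digits_le_one_sub d h01 hnc n, pow_pos hρ₀ (n + 1)]

lemma tsum_digits_lt_one (d : ℕ → ℕ) (h01 : ∀ i, d i ≤ 1)
    (hnc : ∀ i, 1 ≤ i → d i * d (i + 1) = 0) (m : ℕ) (hm₁ : d (m + 1) = 0)
    (hm₂ : d (m + 2) = 0) :
    ∑' j : ℕ, (d (j + 1) : ℝ) * φ⁻¹ ^ (j + 1) < 1 := by
  have hρ₀ := inv_goldenRatio_pos
  have hhead : ∑ j ∈ Finset.range (m + 2), (d (j + 1) : ℝ) * φ⁻¹ ^ (j + 1)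
      ≤ 1 - φ⁻¹ ^ (m + 1) := by
    simpa [Finset.sum_range_succ, hm₁, hm₂] using sum_range_digits_le_one_sub d h01 hnc m
  have htail : ∑' j : ℕ, (d (j + (m + 2) + 1) : ℝ) * φ⁻¹ ^ (j + (m + 2) + 1)
      ≤ φ⁻¹ ^ (m + 2) := by
    have hshift := tsum_digits_le_one (fun j => d (j + (m + 2))) (fun j => h01 _)
      fun j hj => by simpa [Nat.add_right_comm j 1] using hnc (j + (m + 2)) (by omega)
    have hfactor : ∑' j : ℕ, (d (j + (m + 2) + 1) : ℝ) * φ⁻¹ ^ (j + (m + 2) + 1)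
        = φ⁻¹ ^ (m + 2) * ∑' j : ℕ, (d (j + 1 + (m + 2)) : ℝ) * φ⁻¹ ^ (j + 1) := by
      rw [← tsum_mul_left]
      congr 1 with j
      rw [Nat.add_right_comm j 1, pow_add]
      ring_nf
    rw [hfactor]
    exact mul_le_of_le_one_right (by positivity) hshift
  have hgap : φ⁻¹ ^ (m + 2) < φ⁻¹ ^ (m + 1) :=
    pow_lt_pow_right_of_lt_one₀ hρ₀ inv_goldenRatio_lt_one (by omega)
  rw [← (summable_digits d h01).sum_add_tsum_nat_add (m + 2)]
  linarith

theorem stmt2 (d : ℕ → ℕ)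
    (h01 : ∀ i, d i ≤ 1)
    (hnc : ∀ i, 1 ≤ i → d i * d (i + 1) = 0)
    (hnu : ∀ k, ∃ i, k ≤ i ∧ 1 ≤ i ∧ d i = 0 ∧ d (i + 1) = 0) :
    (∑' i : ℕ, (d (i + 1) : ℝ) * φ⁻¹ ^ (i + 1)) ∈ Set.Ico (0 : ℝ) 1 := by
  have hρ₀ := inv_goldenRatio_pos
  obtain ⟨_ | m, -, hi, h₁, h₂⟩ := hnu 0
  · omega
  exact ⟨tsum_nonneg fun j => by positivity, tsum_digits_lt_one d h01 hnc m h₁ h₂⟩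
end

section
/- Let (d_i)_{i≥1} be a sequence with values in {0,1} such that d_i·d_{i+1} = 0 for all i, and which is not ultimately equal to the periodic pattern 0,1,0,1,.... Then for every m ∈ ℕ ∪ {∞}, the sum ∑_{i=1}^m d_i·(-φ)^{-i} lies strictly between -1 and φ^{-1}. -/
open Real goldenRatio

/-!
The terms `ψ ^ (i + 1)` of the series (where `ψ = (-φ)⁻¹`) alternate in sign; the positive ones
sum to `-ψ = φ⁻¹` and the negative ones to `-1`. Since `0 ≤ dᵢ ≤ 1`, every weighted sum lies
between these two totals, and it does so strictly as soon as two consecutive weights vanish: one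
of the two missing terms is positive and the other negative. A partial sum up to `m` is the
infinite sum with the weights cut off after `m`.
-/

open Finset

lemma max_zero_eq_add_abs_div_two (x : ℝ) : max x 0 = (x + |x|) / 2 := by
  rcases le_total x 0 with h | h
  · rw [max_eq_right h, abs_of_nonpos h]; ring
  · rw [max_eq_left h, abs_of_nonneg h]; ring

lemma min_zero_eq_sub_abs_div_two (x : ℝ) : min x 0 = (x - |x|) / 2 := by
  rcases le_total x 0 with h | h
  · rw [min_eq_left h, abs_of_nonpos h]; ring
  · rw [min_eq_right h, abs_of_nonneg h]; ring

lemma abs_max_zero_le (x : ℝ) : |max x 0| ≤ |x| := by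
  rcases le_total x 0 with h | h <;> simp [h]

lemma abs_min_zero_le (x : ℝ) : |min x 0| ≤ |x| := by
  rcases le_total x 0 with h | h <;> simp [h]

section WeightedSum

variable {w a : ℕ → ℝ}

lemma summable_of_abs_le (ha : Summable fun i => |a i|) {f : ℕ → ℝ} (hf : ∀ i, |f i| ≤ |a i|) :
    Summable f :=
  .of_norm_bounded ha fun i => by simpa only [Real.norm_eq_abs] using hf i

theorem tsum_mul_mem_Ioo_of_eq_zero (hw0 : ∀ i, 0 ≤ w i) (hw1 : ∀ i, w i ≤ 1)
    (ha : Summable fun i => |a i|) {j k : ℕ} (hj : w j = 0) (hk : w k = 0) (haj : 0 < a j)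
    (hak : a k < 0) :
    ∑' i, w i * a i ∈ Set.Ioo (∑' i, min (a i) 0) (∑' i, max (a i) 0) := by
  have hwa : Summable fun i => w i * a i := summable_of_abs_le ha fun i => by
    rw [abs_mul, abs_of_nonneg (hw0 i)]
    exact mul_le_of_le_one_left (abs_nonneg _) (hw1 i)
  refine ⟨Summable.tsum_lt_tsum (i := k) (fun i => ?_) (by simp [hk, hak])
      (summable_of_abs_le ha fun i => abs_min_zero_le _) hwa,
    Summable.tsum_lt_tsum (i := j) (fun i => ?_) (by simp [hj, haj]) hwa
      (summable_of_abs_le ha fun i => abs_max_zero_le _)⟩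
  · rcases le_total (a i) 0 with h | h
    · simpa [h] using mul_le_mul_of_nonpos_right (hw1 i) h
    · simpa [h] using mul_nonneg (hw0 i) h
  · rcases le_total (a i) 0 with h | h
    · simpa [h] using mul_nonpos_of_nonneg_of_nonpos (hw0 i) h
    · simpa [h] using mul_le_of_le_one_left h (hw1 i)

end WeightedSum

lemma sum_range_mul_eq_tsum_ite {R : Type*} [NonUnitalNonAssocSemiring R] [TopologicalSpace R]
    (w a : ℕ → R) (m : ℕ) :
    ∑ i ∈ range m, w i * a i = ∑' i, (if i < m then w i else 0) * a i := by
  rw [tsum_eq_sum (s := range m) fun i hi => by simp_all]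
  exact sum_congr rfl fun i hi => by simp_all

section Geometric

variable {r : ℝ}

lemma hasSum_pow_succ (hr : |r| < 1) : HasSum (fun i => r ^ (i + 1)) (r / (1 - r)) := by
  simpa [pow_succ', div_eq_mul_inv] using (hasSum_geometric_of_abs_lt_one hr).mul_left r

lemma hasSum_max_pow_succ_zero (hr : |r| < 1) :
    HasSum (fun i => max (r ^ (i + 1)) 0) ((r / (1 - r) + |r| / (1 - |r|)) / 2) := by
  simp_rw [max_zero_eq_add_abs_div_two, abs_pow]
  exact ((hasSum_pow_succ hr).add (hasSum_pow_succ (by rwa [abs_abs]))).div_const 2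

lemma hasSum_min_pow_succ_zero (hr : |r| < 1) :
    HasSum (fun i => min (r ^ (i + 1)) 0) ((r / (1 - r) - |r| / (1 - |r|)) / 2) := by
  simp_rw [min_zero_eq_sub_abs_div_two, abs_pow]
  exact ((hasSum_pow_succ hr).sub (hasSum_pow_succ (by rwa [abs_abs]))).div_const 2

lemma pow_pos_and_pow_succ_neg_or (hr : r < 0) (n : ℕ) :
    (0 < r ^ n ∧ r ^ (n + 1) < 0) ∨ (r ^ n < 0 ∧ 0 < r ^ (n + 1)) := by
  rcases n.even_or_odd with hn | hn
  · exact .inl ⟨hn.pow_pos hr.ne, hn.add_one.pow_neg hr⟩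
  · exact .inr ⟨hn.pow_neg hr, hn.add_one.pow_pos hr.ne⟩

end Geometric

lemma abs_goldenConj_lt_one : |ψ| < 1 := by
  rw [abs_of_neg goldenConj_neg]
  linarith [neg_one_lt_goldenConj]

lemma goldenConj_div_one_sub_goldenConj : ψ / (1 - ψ) = -ψ ^ 2 := by
  rw [one_sub_goldenRatio, div_eq_mul_inv, inv_goldenRatio, mul_neg, ← sq]

lemma abs_goldenConj_div_one_sub_abs_goldenConj : |ψ| / (1 - |ψ|) = φ := by
  rw [abs_of_neg goldenConj_neg, div_eq_iff (by linarith [neg_one_lt_goldenConj])]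
  rw [sub_neg_eq_add, mul_one_add, goldenRatio_mul_goldenConj]
  linarith [goldenRatio_add_goldenConj]

lemma tsum_max_goldenConj_pow_succ_zero : ∑' i, max (ψ ^ (i + 1)) 0 = -ψ := by
  rw [(hasSum_max_pow_succ_zero abs_goldenConj_lt_one).tsum_eq,
    goldenConj_div_one_sub_goldenConj, abs_goldenConj_div_one_sub_abs_goldenConj]
  linarith [goldenConj_sq, one_sub_goldenRatio]

lemma tsum_min_goldenConj_pow_succ_zero : ∑' i, min (ψ ^ (i + 1)) 0 = -1 := by
  rw [(hasSum_min_pow_succ_zero abs_goldenConj_lt_one).tsum_eq,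
    goldenConj_div_one_sub_goldenConj, abs_goldenConj_div_one_sub_abs_goldenConj]
  linarith [goldenConj_sq, one_sub_goldenRatio]

theorem tsum_mul_goldenConj_pow_succ_mem_Ioo {w : ℕ → ℝ} (hw0 : ∀ i, 0 ≤ w i)
    (hw1 : ∀ i, w i ≤ 1) {j : ℕ} (hj : w j = 0) (hj' : w (j + 1) = 0) :
    ∑' i, w i * ψ ^ (i + 1) ∈ Set.Ioo (-1) (-ψ) := by
  have ha : Summable fun i => |ψ ^ (i + 1)| := by
    simpa only [abs_pow] using
      (hasSum_pow_succ (r := |ψ|) (by rw [abs_abs]; exact abs_goldenConj_lt_one)).summable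
  rw [← tsum_min_goldenConj_pow_succ_zero, ← tsum_max_goldenConj_pow_succ_zero]
  rcases pow_pos_and_pow_succ_neg_or goldenConj_neg (j + 1) with ⟨hpos, hneg⟩ | ⟨hneg, hpos⟩
  · exact tsum_mul_mem_Ioo_of_eq_zero hw0 hw1 ha hj hj' hpos hneg
  · exact tsum_mul_mem_Ioo_of_eq_zero hw0 hw1 ha hj' hj hpos hneg

theorem stmt3_general (d : ℕ → ℕ)
    (h01 : ∀ i, d i ≤ 1)
    (hnu : ∀ k, ∃ i, k ≤ i ∧ 1 ≤ i ∧ d i = 0 ∧ d (i + 1) = 0) :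
    (∀ m : ℕ,
      (∑ i ∈ Finset.range m, (d (i + 1) : ℝ) * (-φ)⁻¹ ^ (i + 1)) ∈
        Set.Ioo (-1 : ℝ) φ⁻¹) ∧
    (∑' i : ℕ, (d (i + 1) : ℝ) * (-φ)⁻¹ ^ (i + 1)) ∈ Set.Ioo (-1 : ℝ) φ⁻¹ := by
  simp only [inv_neg, inv_goldenRatio, neg_neg]
  have hw0 (i : ℕ) : (0 : ℝ) ≤ d (i + 1) := Nat.cast_nonneg _
  have hw1 (i : ℕ) : (d (i + 1) : ℝ) ≤ 1 := by exact_mod_cast h01 (i + 1)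
  refine ⟨fun m => ?_, ?_⟩
  · rw [sum_range_mul_eq_tsum_ite]
    exact tsum_mul_goldenConj_pow_succ_mem_Ioo (j := m) (fun i => by split_ifs <;> simp [hw0])
      (fun i => by split_ifs <;> simp [hw1]) (by simp) (by simp)
  · obtain ⟨_ | j, -, hj, h0, h1⟩ := hnu 0
    · omega
    · exact tsum_mul_goldenConj_pow_succ_mem_Ioo hw0 hw1 (j := j) (by simp [h0]) (by simp [h1])

theorem stmt3 (d : ℕ → ℕ)
    (h01 : ∀ i, d i ≤ 1)
    (hnc : ∀ i, 1 ≤ i → d i * d (i + 1) = 0)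
    (hnu : ∀ k, ∃ i, k ≤ i ∧ 1 ≤ i ∧ d i = 0 ∧ d (i + 1) = 0) :
    (∀ m : ℕ,
      (∑ i ∈ Finset.range m, (d (i + 1) : ℝ) * (-φ)⁻¹ ^ (i + 1)) ∈
        Set.Ioo (-1 : ℝ) φ⁻¹) ∧
    (∑' i : ℕ, (d (i + 1) : ℝ) * (-φ)⁻¹ ^ (i + 1)) ∈ Set.Ioo (-1 : ℝ) φ⁻¹ :=
  stmt3_general d h01 hnu
end

section
/- Under the hypotheses of the previous statement (N = x·φ^m/√5 a positive integer, m ≥ 2, δ_i the base-φ digits of x), the quantity √5·(N − ∑_{i=1}^{m-1} δ_{m-i}·F_i) equals ∑_{i=0}^{m-1} δ_{m-i}·(-φ)^{-i} + ∑_{i=1}^∞ δ_{i+m}·φ^{-i}. -/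
/-!
Multiplying `x = ∑ δᵢ φ⁻ⁱ` by `φ ^ m` moves the radix point `m` places:
`√5 N = x φ ^ m = ∑_{j<m} δ_{m-j} φ ^ j + ∑_{i≥1} δ_{i+m} φ⁻ⁱ`.
By Binet, `√5 F_j = φ ^ j - ψ ^ j` (also for `j = 0`, so the Fibonacci sum may start at `0`),
hence subtracting `√5 ∑ δ_{m-j} F_j` turns each `φ ^ j` of the finite part into
`ψ ^ j = (-φ)⁻¹ ^ j`.
-/

open Real goldenRatio

section RadixShift

variable {K : Type*} [Field K] [TopologicalSpace K] [IsTopologicalRing K] [T2Space K]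

theorem tsum_mul_inv_pow_mul_pow {r : K} (hr : r ≠ 0) {a : ℕ → K}
    (ha : Summable fun i => a (i + 1) * r⁻¹ ^ (i + 1)) (m : ℕ) :
    (∑' i, a (i + 1) * r⁻¹ ^ (i + 1)) * r ^ m =
      (∑ j ∈ Finset.range m, a (m - j) * r ^ j) + ∑' i, a (i + 1 + m) * r⁻¹ ^ (i + 1) := by
  rw [← ha.sum_add_tsum_nat_add m, add_mul, Finset.sum_mul, ← tsum_mul_right]
  congr 1
  · rw [← Finset.sum_range_reflect]
    refine Finset.sum_congr rfl fun i hi => ?_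
    have hi : i < m := Finset.mem_range.mp hi
    rw [show m - 1 - i + 1 = m - i by omega, mul_assoc, inv_pow,
      ← Nat.sub_add_cancel hi.le, pow_add, Nat.sub_add_cancel hi.le,
      inv_mul_cancel_left₀ (pow_ne_zero _ hr)]
  · refine tsum_congr fun i => ?_
    rw [mul_assoc, add_right_comm, pow_add, inv_pow r m, mul_assoc,
      inv_mul_cancel₀ (pow_ne_zero m hr), mul_one]

end RadixShift

theorem summable_digits_mul_pow {r : ℝ} (hr0 : 0 ≤ r) (hr1 : r < 1) {d : ℕ → ℕ}
    (hd : ∀ i, d i ≤ 1) : Summable fun i => (d i : ℝ) * r ^ i :=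
  (summable_geometric_of_lt_one hr0 hr1).of_nonneg_of_le (fun i => by positivity)
    fun i => mul_le_of_le_one_left (by positivity) (by exact_mod_cast hd i)

theorem sqrt_five_mul_sum_fib (c : ℕ → ℝ) (m : ℕ) :
    √5 * ∑ i ∈ Finset.Icc 1 (m - 1), c i * Nat.fib i =
      ∑ i ∈ Finset.range m, c i * (φ ^ i - ψ ^ i) := by
  have hIcc : Finset.Icc 1 (m - 1) = (Finset.range m).erase 0 := by
    ext i
    simp only [Finset.mem_Icc, Finset.mem_erase, Finset.mem_range]
    omega
  rw [Finset.mul_sum, hIcc, Finset.sum_erase _ (by simp)]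
  refine Finset.sum_congr rfl fun i _ => ?_
  rw [coe_fib_eq]
  field_simp

theorem goldenConj_eq_inv_neg_goldenRatio : ψ = (-φ)⁻¹ := by
  rw [← inv_goldenConj, inv_inv]

theorem stmt6_general (N : ℕ) (m : ℕ)
    (x : ℝ)
    (d : ℕ → ℕ)
    (h01 : ∀ i, d i ≤ 1)
    (hexp : x = ∑' i : ℕ, (d (i + 1) : ℝ) * φ⁻¹ ^ (i + 1))
    (hNx : (N : ℝ) = x * φ ^ m / Real.sqrt 5) :
    Real.sqrt 5 *
        ((N : ℝ) - ∑ i ∈ Finset.Icc 1 (m - 1), (d (m - i) : ℝ) * Nat.fib i) =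
      (∑ i ∈ Finset.range m, (d (m - i) : ℝ) * (-φ)⁻¹ ^ i) +
        ∑' i : ℕ, (d (i + 1 + m) : ℝ) * φ⁻¹ ^ (i + 1) := by
  have hsqrt5N : √5 * N = x * φ ^ m := by
    rw [hNx]
    field_simp
  have hsummable : Summable fun i => (d (i + 1) : ℝ) * φ⁻¹ ^ (i + 1) :=
    (summable_nat_add_iff (f := fun i => (d i : ℝ) * φ⁻¹ ^ i) 1).mpr <|
      summable_digits_mul_pow (by positivity) (inv_lt_one_of_one_lt₀ one_lt_goldenRatio) h01
  rw [mul_sub, hsqrt5N, hexp,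
    tsum_mul_inv_pow_mul_pow (a := fun i => (d i : ℝ)) goldenRatio_ne_zero hsummable,
    sqrt_five_mul_sum_fib, ← goldenConj_eq_inv_neg_goldenRatio]
  simp only [mul_sub, Finset.sum_sub_distrib]
  ring

theorem stmt6 (N : ℕ) (hN : 0 < N) (m : ℕ) (hm : 2 ≤ m)
    (x : ℝ) (hx : x ∈ Set.Ico (0 : ℝ) 1)
    (d : ℕ → ℕ)
    (h01 : ∀ i, d i ≤ 1)
    (hnc : ∀ i, 1 ≤ i → d i * d (i + 1) = 0)
    (hnu : ∀ k, ∃ i, k ≤ i ∧ 1 ≤ i ∧ d i = 0 ∧ d (i + 1) = 0)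
    (hexp : x = ∑' i : ℕ, (d (i + 1) : ℝ) * φ⁻¹ ^ (i + 1))
    (hNx : (N : ℝ) = x * φ ^ m / Real.sqrt 5) :
    Real.sqrt 5 *
        ((N : ℝ) - ∑ i ∈ Finset.Icc 1 (m - 1), (d (m - i) : ℝ) * Nat.fib i) =
      (∑ i ∈ Finset.range m, (d (m - i) : ℝ) * (-φ)⁻¹ ^ i) +
        ∑' i : ℕ, (d (i + 1 + m) : ℝ) * φ⁻¹ ^ (i + 1) :=
  stmt6_general N m x d h01 hexp hNx
end

section
/- If x is a rational number in [0,1), then its base-φ digit sequence (δ_i(x))_{i≥1} is purely periodic. -/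
/-!
Let `y_k = T^k x` and let `c_k` be the Galois conjugate of `y_k` in `ℚ(√5)`, so that `c_0 = x`
and `c_{k+1} = ψ c_k - ⌊φ y_k⌋`. The pairs `(y_k, c_k)` stay in a bounded region `D`, and since
`x` is rational they lie in the lattice of conjugate pairs whose denominator is that of `x`;
hence they take only finitely many values. On `D` the pair map is injective: the digit
`⌊φ y_k⌋` is `0` or `1` according as the new conjugate lies above or below `ψ`. An injective
self-map of a finite set is a permutation, so `(x, x)` is periodic, and with it the digits.
-/

open Real goldenRatio

/-- The map `T x = φ x mod 1` of the base-`φ` expansion. -/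
noncomputable def phiMap (y : ℝ) : ℝ := Int.fract (goldenRatio * y)

/-- The `i`-th digit (for `i ≥ 1`) of the base-`φ` expansion of `x ∈ [0,1)`. -/
noncomputable def phiDigit (x : ℝ) (i : ℕ) : ℤ :=
  ⌊goldenRatio * (phiMap^[i - 1] x)⌋

open Function Set

theorem Set.Finite.mem_periodicPts_of_mapsTo_of_injOn {α : Type*} {f : α → α} {s : Set α}
    (hs : s.Finite) (hmaps : MapsTo f s s) (hinj : InjOn f s) {x : α} (hx : x ∈ s) :
    x ∈ periodicPts f := by
  have := hs.to_subtype
  obtain ⟨n, hn, hper⟩ :=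
    mem_periodicPts.1 ((hmaps.restrict_inj.2 hinj).mem_periodicPts ⟨x, hx⟩)
  exact mk_mem_periodicPts hn (hper.map hmaps.val_restrict_apply)

lemma floor_goldenRatio_mul_eq_zero_or_one {y : ℝ} (h0 : 0 ≤ y) (h1 : y < 1) :
    ⌊φ * y⌋ = 0 ∨ ⌊φ * y⌋ = 1 := by
  have hlo : 0 ≤ ⌊φ * y⌋ := Int.floor_nonneg.2 (mul_nonneg goldenRatio_pos.le h0)
  have hhi : ⌊φ * y⌋ < 2 :=
    Int.floor_lt.2 (by push_cast; nlinarith [goldenRatio_lt_two, goldenRatio_pos])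
  omega

/-- The natural extension of `phiMap`: the second coordinate tracks the Galois conjugate. -/
noncomputable def phiExt (p : ℝ × ℝ) : ℝ × ℝ :=
  (φ * p.1 - ⌊φ * p.1⌋, ψ * p.2 - ⌊φ * p.1⌋)

lemma semiconj_fst_phiExt : Semiconj Prod.fst phiExt phiMap := fun _ => rfl

/-- `[0,1) × (-φ,1)` with the corner `[φ⁻¹,1) × (-φ,ψ]` removed, the corner that `phiExt` never
reaches because a digit `1` is always followed by a `0`. -/
def phiExtDomain : Set (ℝ × ℝ) :=
  {p | 0 ≤ p.1 ∧ p.1 < 1 ∧ -φ < p.2 ∧ p.2 < 1 ∧ (1 ≤ φ * p.1 → ψ < p.2)}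

lemma mk_self_mem_phiExtDomain {x : ℝ} (hx : x ∈ Ico 0 1) : (x, x) ∈ phiExtDomain :=
  ⟨hx.1, hx.2, by linarith [goldenRatio_pos, hx.1], hx.2,
    fun _ => by linarith [goldenConj_neg, hx.1]⟩

lemma mapsTo_phiExt_phiExtDomain : MapsTo phiExt phiExtDomain phiExtDomain := by
  rintro ⟨y, c⟩ ⟨hy0, hy1, hc0, hc1, hdigit⟩
  dsimp only at hy0 hy1 hc0 hc1 hdigit
  simp only [phiExt, phiExtDomain, mem_ofPred_eq]
  have hψ := neg_one_lt_goldenConj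
  have hψ0 := goldenConj_neg
  have hmul : ψ * φ = -1 := goldenConj_mul_goldenRatio
  have hadd : φ + ψ = 1 := goldenRatio_add_goldenConj
  refine ⟨sub_nonneg.2 (Int.floor_le _), by linarith [Int.lt_floor_add_one (φ * y)], ?_⟩
  rcases floor_goldenRatio_mul_eq_zero_or_one hy0 hy1 with hd | hd <;> rw [hd] <;> push_cast
  · refine ⟨by nlinarith, by nlinarith, fun _ => by nlinarith⟩
  · have hge : 1 ≤ φ * y := by simpa [hd] using Int.floor_le (φ * y)
    have hc : ψ < c := hdigit hge
    refine ⟨by nlinarith, by nlinarith, fun h => absurd h (not_le.2 ?_)⟩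
    nlinarith [goldenRatio_sq]

lemma goldenConj_lt_phiExt_snd_iff {p : ℝ × ℝ} (hp : p ∈ phiExtDomain) :
    ψ < (phiExt p).2 ↔ ⌊φ * p.1⌋ = 0 := by
  obtain ⟨hy0, hy1, -, hc1, hdigit⟩ := hp
  have hψ0 := goldenConj_neg
  simp only [phiExt]
  rcases floor_goldenRatio_mul_eq_zero_or_one hy0 hy1 with hd | hd <;> rw [hd] <;> push_cast
  · simp only [sub_zero, iff_true]
    nlinarith
  · have hc : ψ < p.2 := hdigit (by simpa [hd] using Int.floor_le (φ * p.1))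
    simp only [iff_false, not_lt]
    nlinarith [goldenConj_sq]

lemma injOn_phiExt_phiExtDomain : InjOn phiExt phiExtDomain := by
  intro p hp p' hp' h
  have hdigit : ⌊φ * p.1⌋ = ⌊φ * p'.1⌋ := by
    have hiff := (goldenConj_lt_phiExt_snd_iff hp).symm.trans
      (h ▸ goldenConj_lt_phiExt_snd_iff hp')
    have := floor_goldenRatio_mul_eq_zero_or_one hp.1 hp.2.1
    have := floor_goldenRatio_mul_eq_zero_or_one hp'.1 hp'.2.1
    omega
  simp only [phiExt, hdigit, Prod.mk.injEq, sub_left_inj] at h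
  exact Prod.ext (mul_left_cancel₀ goldenRatio_ne_zero h.1) (mul_left_cancel₀ goldenConj_ne_zero h.2)

/-- Points `(a + b φ) / N` of `ℚ(√5)` paired with their Galois conjugates `(a + b ψ) / N`. -/
def conjLattice (N : ℕ) : Set (ℝ × ℝ) :=
  range fun ab : ℤ × ℤ => ((ab.1 + ab.2 * φ) / N, (ab.1 + ab.2 * ψ) / N)

lemma mul_div_sub_intCast_of_sq_eq {t : ℝ} (ht : t ^ 2 = t + 1) {N : ℕ} (hN : N ≠ 0)
    (a b d : ℤ) :
    t * ((a + b * t) / N) - d = ((b - d * N : ℤ) + (a + b : ℤ) * t) / N := by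
  field_simp
  push_cast
  linear_combination (b : ℝ) * ht

lemma mapsTo_phiExt_conjLattice {N : ℕ} (hN : N ≠ 0) :
    MapsTo phiExt (conjLattice N) (conjLattice N) := by
  rintro _ ⟨⟨a, b⟩, rfl⟩
  set d := ⌊φ * ((a + b * φ) / N)⌋
  exact ⟨(b - d * N, a + b), Prod.ext (mul_div_sub_intCast_of_sq_eq goldenRatio_sq hN a b d).symm
    (mul_div_sub_intCast_of_sq_eq goldenConj_sq hN a b d).symm⟩

lemma finite_conjLattice_inter_phiExtDomain {N : ℕ} (hN : N ≠ 0) :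
    (conjLattice N ∩ phiExtDomain).Finite := by
  let C : ℤ := 7 * N
  rw [conjLattice, ← image_preimage_eq_range_inter]
  refine .image _ (((finite_Icc (-C) C).prod (finite_Icc (-C) C)).subset ?_)
  rintro ⟨a, b⟩ ⟨hy0, hy1, hc0, hc1, -⟩
  dsimp only at hy0 hy1 hc0 hc1
  have hNpos : (0 : ℝ) < N := by positivity
  simp only [le_div_iff₀ hNpos, div_lt_iff₀ hNpos, lt_div_iff₀ hNpos, zero_mul, one_mul]
    at hy0 hy1 hc0 hc1
  have hφ1 := one_lt_goldenRatio
  have hφ2 := goldenRatio_lt_two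
  rw [← one_sub_goldenConj] at hc0 hc1
  have hb : -(3 * N : ℝ) < b ∧ (b : ℝ) < 3 * N := by
    constructor <;> nlinarith
  have ha : -(7 * N : ℝ) < a ∧ (a : ℝ) < 7 * N := by
    constructor <;> nlinarith
  simp only [mem_prod, mem_Icc, C]
  constructor <;> constructor <;> norm_cast at ha hb <;> omega

theorem stmt8 (q : ℚ) (x : ℝ) (hxq : x = (q : ℝ)) (hx : x ∈ Set.Ico (0 : ℝ) 1) :
    ∃ p : ℕ, 0 < p ∧ ∀ i, 1 ≤ i → phiDigit x (i + p) = phiDigit x i := by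
  have hN : q.den ≠ 0 := q.den_nz
  have hstart : (x, x) ∈ conjLattice q.den ∩ phiExtDomain :=
    ⟨⟨(q.num, 0), by simp [hxq, Rat.cast_def]⟩, mk_self_mem_phiExtDomain hx⟩
  obtain ⟨p, hp, hper⟩ := mem_periodicPts.1 <|
    (finite_conjLattice_inter_phiExtDomain hN).mem_periodicPts_of_mapsTo_of_injOn
      ((mapsTo_phiExt_conjLattice hN).inter_inter mapsTo_phiExt_phiExtDomain)
      (injOn_phiExt_phiExtDomain.mono inter_subset_right) hstart
  have hxper : phiMap^[p] x = x := (hper.map semiconj_fst_phiExt).eq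
  refine ⟨p, hp, fun i hi => ?_⟩
  rw [phiDigit, phiDigit, show i + p - 1 = i - 1 + p by omega, iterate_add_apply, hxper]
end

section
/- If x ∈ ℚ(φ) ∩ [0,1), then the base-φ digit sequence of x is ultimately periodic. -/
open Real goldenRatio

open Set

lemma abs_goldenConj_le : |ψ| ≤ 2 / 3 := by
  rw [abs_of_neg goldenConj_neg, goldenConj]
  nlinarith [sq_sqrt (show (0 : ℝ) ≤ 5 by norm_num), sqrt_nonneg 5]

lemma phiMap_mem_Ico (y : ℝ) : phiMap y ∈ Ico 0 1 :=
  ⟨Int.fract_nonneg _, Int.fract_lt_one _⟩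

lemma abs_floor_goldenRatio_mul_le_one {y : ℝ} (hy : y ∈ Ico 0 1) :
    |(⌊φ * y⌋ : ℝ)| ≤ 1 := by
  have h0 : 0 ≤ ⌊φ * y⌋ := Int.floor_nonneg.2 (mul_nonneg goldenRatio_pos.le hy.1)
  have h2 : ⌊φ * y⌋ < 2 :=
    Int.floor_lt.2 (by push_cast; nlinarith [goldenRatio_lt_two, goldenRatio_pos, hy.1, hy.2])
  rw [abs_le]
  constructor <;> norm_cast <;> omega

/-- The element `(m + n g) / d` of `ℚ(g)` for `p = (m, n)`; evaluating at `g = ψ` instead of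
`g = φ` is the Galois conjugation of `ℚ(φ)`. -/
noncomputable def pairVal (g : ℝ) (d : ℕ) (p : ℤ × ℤ) : ℝ := (p.1 + p.2 * g) / d

lemma pairVal_shift {g : ℝ} (hg : g ^ 2 = g + 1) {d : ℕ} (hd : 0 < d) (k : ℤ) (p : ℤ × ℤ) :
    pairVal g d (p.2 - k * d, p.1 + p.2) = g * pairVal g d p - k := by
  unfold pairVal
  field_simp
  push_cast
  linear_combination (-(p.2 : ℝ)) * hg

lemma exists_pairVal_eq (q₁ q₂ : ℚ) (g : ℝ) :
    ∃ d : ℕ, 0 < d ∧ ∃ p : ℤ × ℤ, (q₁ : ℝ) + q₂ * g = pairVal g d p := by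
  refine ⟨q₁.den * q₂.den, by positivity, (q₁.num * q₂.den, q₂.num * q₁.den), ?_⟩
  unfold pairVal
  rw [Rat.cast_def q₁, Rat.cast_def q₂]
  push_cast
  field_simp

def conjBounded (d : ℕ) (C : ℝ) : Set ℝ :=
  {y | y ∈ Ico 0 1 ∧ ∃ p : ℤ × ℤ, y = pairVal φ d p ∧ |pairVal ψ d p| ≤ C}

lemma mapsTo_phiMap_conjBounded {d : ℕ} (hd : 0 < d) {C : ℝ} (hC : 3 ≤ C) :
    MapsTo phiMap (conjBounded d C) (conjBounded d C) := by
  rintro _ ⟨hy, p, rfl, hp⟩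
  set k := ⌊φ * pairVal φ d p⌋
  refine ⟨phiMap_mem_Ico _, (p.2 - k * d, p.1 + p.2), ?_, ?_⟩
  · rw [pairVal_shift goldenRatio_sq hd, phiMap, Int.fract]
  · rw [pairVal_shift goldenConj_sq hd]
    have hk := abs_floor_goldenRatio_mul_le_one hy
    calc |ψ * pairVal ψ d p - k| ≤ |ψ| * |pairVal ψ d p| + |(k : ℝ)| := by
          rw [← abs_mul]; exact abs_sub _ _
      _ ≤ 2 / 3 * C + 1 := by gcongr; exact abs_goldenConj_le
      _ ≤ C := by linarith

lemma abs_le_of_mem_conjBounded {d : ℕ} (hd : 0 < d) {C : ℝ} {p : ℤ × ℤ}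
    (hy : pairVal φ d p ∈ Ico 0 1) (hz : |pairVal ψ d p| ≤ C) :
    |(p.1 : ℝ)| ≤ d * (3 + 2 * C) ∧ |(p.2 : ℝ)| ≤ d * (3 + 2 * C) := by
  have hd' : (0 : ℝ) < d := by exact_mod_cast hd
  obtain ⟨hz₁, hz₂⟩ := abs_le.1 hz
  have hφ : (p.1 : ℝ) + p.2 * φ = d * pairVal φ d p := by unfold pairVal; field_simp
  have hψ : (p.1 : ℝ) + p.2 * ψ = d * pairVal ψ d p := by unfold pairVal; field_simp
  have h5 : (2 : ℝ) ≤ φ - ψ := by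
    rw [goldenRatio_sub_goldenConj]
    nlinarith [sq_sqrt (show (0 : ℝ) ≤ 5 by norm_num), sqrt_nonneg 5]
  have hyz : |pairVal φ d p - pairVal ψ d p| ≤ 1 + C := by
    rw [abs_le]; constructor <;> linarith [hy.1, hy.2]
  have hn : |(p.2 : ℝ)| * 2 ≤ d * (1 + C) := calc
    |(p.2 : ℝ)| * 2 ≤ |(p.2 : ℝ)| * (φ - ψ) := by gcongr
    _ = d * |pairVal φ d p - pairVal ψ d p| := by
      rw [← abs_of_pos (by linarith : (0 : ℝ) < φ - ψ), ← abs_mul, ← abs_of_pos hd', ← abs_mul]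
      congr 1
      linear_combination hφ - hψ
    _ ≤ d * (1 + C) := by gcongr
  have hm : |(p.1 : ℝ)| ≤ d + |(p.2 : ℝ)| * 2 := calc
    |(p.1 : ℝ)| = |d * pairVal φ d p - p.2 * φ| := by rw [← hφ]; ring_nf
    _ ≤ |d * pairVal φ d p| + |(p.2 : ℝ)| * φ := by
      rw [← abs_of_pos goldenRatio_pos, ← abs_mul, abs_of_pos goldenRatio_pos]; exact abs_sub _ _
    _ ≤ d + |(p.2 : ℝ)| * 2 := by
      gcongr
      · rw [abs_mul, abs_of_pos hd', abs_of_nonneg hy.1]; nlinarith [hy.2]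
      · exact goldenRatio_lt_two.le
  have hC : 0 ≤ C := (abs_nonneg _).trans hz
  constructor <;> nlinarith

lemma conjBounded_finite {d : ℕ} (hd : 0 < d) (C : ℝ) : (conjBounded d C).Finite := by
  set M := ⌈d * (3 + 2 * C)⌉
  refine ((Set.finite_Icc (-M, -M) (M, M)).image (pairVal φ d)).subset ?_
  rintro _ ⟨hy, p, rfl, hp⟩
  have hM : ∀ n : ℤ, |(n : ℝ)| ≤ d * (3 + 2 * C) → -M ≤ n ∧ n ≤ M := fun n hn =>
    abs_le.1 (by exact_mod_cast hn.trans (Int.le_ceil _))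
  obtain ⟨h₁, h₂⟩ := abs_le_of_mem_conjBounded hd hy hp
  exact ⟨p, ⟨⟨(hM _ h₁).1, (hM _ h₂).1⟩, ⟨(hM _ h₁).2, (hM _ h₂).2⟩⟩, rfl⟩

lemma iterate_add_of_iterate_eq {α : Type*} {f : α → α} {x : α} {i j : ℕ} (hij : i ≤ j)
    (h : f^[i] x = f^[j] x) {u : ℕ} (hu : i ≤ u) : f^[u + (j - i)] x = f^[u] x := by
  rw [show u + (j - i) = (u - i) + j by omega, Function.iterate_add_apply, ← h,
    ← Function.iterate_add_apply, Nat.sub_add_cancel hu]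

lemma phiDigit_eventually_periodic_of_iterate_eq {x : ℝ} {i j : ℕ} (hij : i < j)
    (h : phiMap^[i] x = phiMap^[j] x) :
    ∃ p N : ℕ, 0 < p ∧ ∀ t, N ≤ t → phiDigit x (t + p) = phiDigit x t := by
  refine ⟨j - i, i + 1, by omega, fun t ht => ?_⟩
  rw [phiDigit, phiDigit, show t + (j - i) - 1 = t - 1 + (j - i) by omega,
    iterate_add_of_iterate_eq hij.le h (by omega)]

theorem stmt9 (x : ℝ) (hx : x ∈ Set.Ico (0 : ℝ) 1)
    (hQ : ∃ q₁ q₂ : ℚ, x = (q₁ : ℝ) + (q₂ : ℝ) * φ) :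
    ∃ p N : ℕ, 0 < p ∧ ∀ i, N ≤ i → phiDigit x (i + p) = phiDigit x i := by
  obtain ⟨q₁, q₂, rfl⟩ := hQ
  obtain ⟨d, hd, p, hp⟩ := exists_pairVal_eq q₁ q₂ φ
  set C := max 3 |pairVal ψ d p|
  have hxS : (q₁ : ℝ) + q₂ * φ ∈ conjBounded d C := ⟨hx, p, hp, le_max_right _ _⟩
  obtain ⟨i, j, hij, h⟩ := (conjBounded_finite hd C).exists_lt_map_eq_of_forall_mem
    (f := fun n => phiMap^[n] ((q₁ : ℝ) + q₂ * φ))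
    fun n => (mapsTo_phiMap_conjBounded hd (le_max_left _ _)).iterate n hxS
  exact phiDigit_eventually_periodic_of_iterate_eq hij h
end

section
/- For every integer a ≥ 3 there exist integers M, n_0, i_0 ≥ 1 and periodic {0,1}-valued sequences z^{(0)}, ..., z^{(M-1)} and w^{(1)}, ..., w^{(i_0)} such that for all n ≥ n_0 with gcd(a, F_n) = 1, the Zeckendorf representation of (a^{-1} mod F_n) is ∑_{i=i_0}^{n-1} z^{(n mod M)}_{n-i}·F_i + ∑_{i=1}^{i_0-1} w^{(i)}_n·F_i. -/
open Function Filter Finset Real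
open scoped goldenRatio

theorem Function.Injective.exists_iterate_eq_id {α : Type*} [Finite α] {f : α → α}
    (hf : Injective f) : ∃ p, 0 < p ∧ f^[p] = id := by
  let σ : Equiv.Perm α := Equiv.ofBijective f hf.bijective_of_finite
  refine ⟨orderOf σ, orderOf_pos σ, ?_⟩
  rw [← show ⇑σ = f from rfl, ← Equiv.Perm.coe_pow, pow_orderOf_eq_one, Equiv.Perm.coe_one]

theorem Irrational.intCast_mul_add_eq_zero_iff {x : ℝ} (hx : Irrational x) {u v : ℤ} :
    (u : ℝ) * x + v = 0 ↔ u = 0 ∧ v = 0 := by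
  refine ⟨fun h => ?_, fun ⟨hu, hv⟩ => by simp [hu, hv]⟩
  by_cases hu : u = 0
  · subst hu
    exact ⟨rfl, by simpa using h⟩
  · exact absurd h ((hx.intCast_mul hu).add_intCast v).ne_zero

theorem Nat.exists_periodic_fib_zmod (a : ℕ) [NeZero a] :
    ∃ P, 0 < P ∧ Periodic (fun n => (fib n : ZMod a)) P := by
  let f : ZMod a × ZMod a → ZMod a × ZMod a := fun p => (p.2, p.1 + p.2)
  have hf : Injective f := fun p q h => by
    simp only [f, Prod.ext_iff] at h
    obtain ⟨h2, h12⟩ := h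
    rw [h2] at h12
    exact Prod.ext (add_right_cancel h12) h2
  have hcast : Semiconj (Prod.map ((↑) : ℕ → ZMod a) (↑))
      (fun p : ℕ × ℕ => (p.2, p.1 + p.2)) f := fun p => by simp [f]
  have hfib : ∀ n, (fib n : ZMod a) = (f^[n] (0, 1)).1 := fun n => by
    have h := congrArg Prod.fst (hcast.iterate_right n (0, 1))
    simp only [Prod.map_fst, Prod.map_apply, Nat.cast_zero, Nat.cast_one] at h
    exact h
  obtain ⟨P, hP, hfP⟩ := hf.exists_iterate_eq_id
  exact ⟨P, hP, fun n => by simp only [hfib, iterate_add_apply, hfP, id]⟩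

theorem invMod_eq_of_mul_eq {a m x t : ℕ} (hm : 1 < m) (ht : t < a) (hx : a * x = t * m + 1) :
    invMod a m = x := by
  have hx0 : 0 < x := Nat.pos_of_ne_zero fun h => by simp [h] at hx
  have hxm : x < m := by
    by_contra! h
    nlinarith
  have hxinv : a * x ≡ 1 [MOD m] := by
    rw [hx, mul_comm]; exact Nat.mul_add_mod m t 1
  have hmem : x ∈ {b | 0 < b ∧ a * b % m = 1 % m} := ⟨hx0, hxinv⟩
  have hy : a * invMod a m ≡ 1 [MOD m] := (Nat.sInf_mem ⟨x, hmem⟩).2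
  have hle : invMod a m ≤ x := Nat.sInf_le hmem
  set y := invMod a m
  have hyx : y ≡ x [MOD m] :=
    calc y = y * 1 := (mul_one y).symm
      _ ≡ y * (a * x) [MOD m] := hxinv.symm.mul_left y
      _ = x * (a * y) := by ring
      _ ≡ x * 1 [MOD m] := Nat.ModEq.mul_left x hy
      _ = x := mul_one x
  exact hyx.eq_of_lt_of_lt (hle.trans_lt hxm) hxm

namespace Nat

section
local instance : IsTrans ℕ fun a b ↦ b + 2 ≤ a := ⟨fun _ _ _ hab hbc => by omega⟩

theorem pairwise_zeckendorf_append_zero (N : ℕ) :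
    (zeckendorf N ++ [0]).Pairwise fun a b ↦ b + 2 ≤ a :=
  (isZeckendorfRep_zeckendorf N).pairwise
end

theorem two_le_of_mem_zeckendorf {x N : ℕ} (hx : x ∈ zeckendorf N) : 2 ≤ x := by
  simpa using (List.pairwise_append.mp (pairwise_zeckendorf_append_zero N)).2.2 x hx 0 (by simp)

theorem nodup_zeckendorf (N : ℕ) : (zeckendorf N).Nodup :=
  (List.pairwise_append.mp (pairwise_zeckendorf_append_zero N)).1.imp fun h => by omega

theorem add_one_notMem_zeckendorf {x N : ℕ} (hx : x ∈ zeckendorf N) :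
    x + 1 ∉ zeckendorf N := fun hx1 => by
  have : Std.Symm fun a b : ℕ ↦ b + 2 ≤ a ∨ a + 2 ≤ b := ⟨fun _ _ h => h.symm⟩
  have := ((List.pairwise_append.mp (pairwise_zeckendorf_append_zero N)).1.imp
    (S := fun a b : ℕ ↦ b + 2 ≤ a ∨ a + 2 ≤ b) Or.inl).forall hx hx1 (by omega)
  omega

theorem lt_of_mem_zeckendorf {x N m : ℕ} (hN : N < fib m) (hx : x ∈ zeckendorf N) : x < m := by
  by_contra! h
  have : fib x ≤ N := by
    conv_rhs => rw [← sum_zeckendorf_fib N]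
    exact List.single_le_sum (fun _ _ => Nat.zero_le _) _ (List.mem_map_of_mem hx)
  exact absurd (fib_mono h) (by omega)

theorem sum_indicator_zeckendorf_mul_fib {N m : ℕ} (hN : N < fib m) :
    ∑ i ∈ Icc 1 (m - 1), (if i ∈ zeckendorf N then 1 else 0) * fib i = N := by
  have hsub : (zeckendorf N).toFinset ⊆ Icc 1 (m - 1) := fun x hx => by
    rw [List.mem_toFinset] at hx
    have := two_le_of_mem_zeckendorf hx
    have := lt_of_mem_zeckendorf hN hx
    rw [mem_Icc]; omega
  simp only [ite_mul, one_mul, zero_mul]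
  rw [← sum_filter]
  convert List.sum_toFinset fib (nodup_zeckendorf N) using 2
  · ext x
    simpa using fun hx => hsub (List.mem_toFinset.mpr hx)
  · simp

end Nat

namespace GoldenExpansion

/-- `(u, v)` stands for `u φ + v ∈ ℤ[φ]`; `pairEval x` evaluates it at a root `x` of
`X² = X + 1`, and `pairFib · m` at the Fibonacci pair `(F_{m+1}, F_m)`. -/
noncomputable def pairEval (x : ℝ) (s : ℤ × ℤ) : ℝ := s.1 * x + s.2

def pairFib (s : ℤ × ℤ) (m : ℕ) : ℤ := s.1 * Nat.fib (m + 1) + s.2 * Nat.fib m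

variable (a : ℕ)

noncomputable def digit (s : ℤ × ℤ) : ℕ := if (a : ℝ) ≤ φ * pairEval φ s then 1 else 0

/-- One step `x ↦ φ x - d a` of the greedy expansion of `x / a` in base `φ`. -/
noncomputable def step (s : ℤ × ℤ) : ℤ × ℤ := (s.1 + s.2, s.1 - digit a s * a)

/-- An invariant of the expansion of `t / a` for `0 < t < a`; a conjugate below `a ψ` records
that the previous digit was `1`. -/
def Admissible (s : ℤ × ℤ) : Prop :=
  0 < pairEval φ s ∧ pairEval φ s < a ∧ -(a * φ) < pairEval ψ s ∧ pairEval ψ s < a ∧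
    (pairEval ψ s < a * ψ → digit a s = 0)

variable {a} {s : ℤ × ℤ}

theorem digit_le_one : digit a s ≤ 1 := by
  unfold digit; split <;> simp

theorem digit_eq_one_iff : digit a s = 1 ↔ (a : ℝ) ≤ φ * pairEval φ s := by
  unfold digit; split <;> simp [*]

theorem digit_eq_zero_iff : digit a s = 0 ↔ φ * pairEval φ s < a := by
  unfold digit; split <;> simp_all

theorem pairEval_step {x : ℝ} (hx : x ^ 2 = x + 1) :
    pairEval x (step a s) = x * pairEval x s - digit a s * a := by
  simp only [pairEval, step]
  push_cast
  linear_combination (-(s.1 : ℝ)) * hx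

theorem pairFib_succ (m : ℕ) :
    pairFib s (m + 1) = a * digit a s * Nat.fib m + pairFib (step a s) m := by
  simp only [pairFib, step, Nat.fib_add_two]
  push_cast
  ring

@[simp]
theorem pairFib_zero_left (t : ℤ) (m : ℕ) : pairFib (0, t) m = t * Nat.fib m := by
  simp [pairFib]

theorem pairFib_eq_sum_add (s : ℤ × ℤ) {m n : ℕ} (hmn : m ≤ n) :
    pairFib s n = a * ((∑ i ∈ Ico m n, digit a ((step a)^[n - i - 1] s) * Nat.fib i : ℕ) : ℤ) +
      pairFib ((step a)^[n - m] s) m := by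
  obtain ⟨J, rfl⟩ := Nat.exists_eq_add_of_le hmn
  induction J generalizing s with
  | zero => simp
  | succ J ih =>
    have hsum : ∑ i ∈ Ico m (m + J), digit a ((step a)^[m + J + 1 - i - 1] s) * Nat.fib i =
        ∑ i ∈ Ico m (m + J), digit a ((step a)^[m + J - i - 1] (step a s)) * Nat.fib i :=
      sum_congr rfl fun i hi => by
        rw [mem_Ico] at hi
        rw [show m + J + 1 - i - 1 = m + J - i - 1 + 1 by omega, iterate_succ_apply]
    rw [← add_assoc, pairFib_succ, ih (step a s) (by omega), sum_Ico_succ_top (by omega), hsum,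
      show m + J + 1 - m = J + 1 by omega, show m + J - m = J by omega, iterate_succ_apply]
    simp only [show m + J + 1 - (m + J) - 1 = 0 by omega, iterate_zero_apply]
    push_cast
    ring

theorem pairFib_cast (s : ℤ × ℤ) (m : ℕ) :
    (pairFib s m : ℝ) = (pairEval φ s * φ ^ m - pairEval ψ s * ψ ^ m) / √5 := by
  simp only [pairFib, pairEval]
  push_cast
  rw [Real.coe_fib_eq, Real.coe_fib_eq]
  ring

theorem tendsto_pairFib (h : 0 < pairEval φ s) : Tendsto (pairFib s) atTop atTop := by
  rw [← tendsto_intCast_atTop_iff (R := ℝ)]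
  have hmain : Tendsto (fun m : ℕ => pairEval φ s / √5 * φ ^ m - |pairEval ψ s| / √5)
      atTop atTop :=
    tendsto_atTop_add_const_right _ _
      ((tendsto_pow_atTop_atTop_of_one_lt one_lt_goldenRatio).const_mul_atTop (by positivity))
  refine tendsto_atTop_mono (fun m => ?_) hmain
  have hψ : |pairEval ψ s * ψ ^ m| ≤ |pairEval ψ s| := by
    rw [abs_mul, abs_pow]
    exact mul_le_of_le_one_right (abs_nonneg _)
      (pow_le_one₀ (abs_nonneg _) (abs_le.mpr ⟨neg_one_lt_goldenConj.le, goldenConj_neg.le.trans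
        zero_le_one⟩))
  rw [pairFib_cast, sub_div, mul_comm_div, ← mul_div_assoc]
  gcongr
  exact (le_abs_self _).trans hψ

theorem eventually_pairFib_add_lt {s' : ℤ × ℤ} (h : pairEval φ s < pairEval φ s') (c : ℤ) :
    ∀ᶠ m in atTop, pairFib s m + c < pairFib s' m := by
  have hpos : 0 < pairEval φ (s' - s) := by
    simp only [pairEval, Prod.fst_sub, Prod.snd_sub, Int.cast_sub] at h ⊢; linarith
  filter_upwards [(tendsto_pairFib hpos).eventually_gt_atTop c] with m hm
  simp only [pairFib, Prod.fst_sub, Prod.snd_sub] at hm ⊢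
  linarith

namespace Admissible

theorem lt_goldenRatio_mul (h : Admissible a s) (hd : digit a s = 1) :
    (a : ℝ) < φ * pairEval φ s := by
  refine (digit_eq_one_iff.mp hd).lt_of_ne fun heq => ?_
  have hzero : ((s.1 + s.2 : ℤ) : ℝ) * φ + ((s.1 - a : ℤ) : ℝ) = 0 := by
    simp only [pairEval] at heq
    push_cast
    linear_combination -heq - (s.1 : ℝ) * goldenRatio_sq
  obtain ⟨h1, h2⟩ := goldenRatio_irrational.intCast_mul_add_eq_zero_iff.mp hzero
  have hu : (s.1 : ℝ) = a := by exact_mod_cast (by omega : s.1 = a)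
  have hv : (s.2 : ℝ) = -a := by exact_mod_cast (by omega : s.2 = -a)
  have := h.2.2.1
  have hsum : (a : ℝ) * φ + a * ψ = a := by rw [← mul_add, goldenRatio_add_goldenConj, mul_one]
  simp only [pairEval, hu, hv] at this
  linarith

theorem mul_goldenConj_lt (h : Admissible a s) (hd : digit a s = 1) :
    (a : ℝ) * ψ < pairEval ψ s := by
  refine (not_lt.mp fun hlt => by simp [h.2.2.2.2 hlt] at hd).lt_of_ne' fun heq => ?_
  have hzero : ((s.1 - a : ℤ) : ℝ) * ψ + ((s.2 : ℤ) : ℝ) = 0 := by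
    simp only [pairEval] at heq
    push_cast
    linear_combination heq
  obtain ⟨h1, h2⟩ := goldenConj_irrational.intCast_mul_add_eq_zero_iff.mp hzero
  have hu : (s.1 : ℝ) = a := by exact_mod_cast (by omega : s.1 = a)
  have := h.2.1
  have ha : (0 : ℝ) < a := h.1.trans h.2.1
  simp only [pairEval, hu, h2, Int.cast_zero, add_zero] at this
  nlinarith [one_lt_goldenRatio]

theorem digit_step_eq_zero (h : Admissible a s) (hd : digit a s = 1) :
    digit a (step a s) = 0 := by
  rw [digit_eq_zero_iff, pairEval_step goldenRatio_sq, hd]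
  have := h.2.1
  push_cast
  nlinarith [goldenRatio_sq, one_lt_goldenRatio]

theorem digit_step_mul_digit_eq_zero (h : Admissible a s) :
    digit a (GoldenExpansion.step a s) * digit a s = 0 := by
  rcases Nat.le_one_iff_eq_zero_or_eq_one.mp (digit_le_one (a := a) (s := s)) with hd | hd
  · rw [hd, mul_zero]
  · rw [h.digit_step_eq_zero hd, zero_mul]

theorem step (h : Admissible a s) : Admissible a (step a s) := by
  obtain ⟨hx0, hxa, hyl, hyu, -⟩ := id h
  have hψ := goldenConj_neg
  have hφψ := goldenRatio_mul_goldenConj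
  rw [Admissible, pairEval_step goldenRatio_sq, pairEval_step goldenConj_sq]
  rcases Nat.le_one_iff_eq_zero_or_eq_one.mp (digit_le_one (a := a) (s := s)) with hd | hd
  · have hφx := digit_eq_zero_iff.mp hd
    simp only [hd, Nat.cast_zero, zero_mul, sub_zero]
    refine ⟨by positivity, hφx, by nlinarith [goldenConj_sq], by nlinarith, fun h' => ?_⟩
    nlinarith
  · have hφx := h.lt_goldenRatio_mul hd
    have hψy := h.mul_goldenConj_lt hd
    simp only [hd, Nat.cast_one, one_mul]
    refine ⟨by linarith, by nlinarith [goldenRatio_lt_two], by nlinarith [goldenConj_sq],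
      by nlinarith [goldenConj_sq], fun _ => h.digit_step_eq_zero hd⟩

theorem digit_eq_one_iff_step (h : Admissible a s) :
    digit a s = 1 ↔ pairEval ψ (GoldenExpansion.step a s) < a * ψ := by
  have hψ := goldenConj_neg
  rw [pairEval_step goldenConj_sq]
  rcases Nat.le_one_iff_eq_zero_or_eq_one.mp (digit_le_one (a := a) (s := s)) with hd | hd
  · simp only [hd, Nat.cast_zero, zero_mul, sub_zero, zero_ne_one, false_iff, not_lt]
    nlinarith [h.2.2.2.1]
  · have := h.mul_goldenConj_lt hd
    simp only [hd, Nat.cast_one, one_mul, true_iff]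
    nlinarith [goldenConj_sq]

theorem iterate (h : Admissible a s) (k : ℕ) : Admissible a ((GoldenExpansion.step a)^[k] s) := by
  induction k with
  | zero => exact h
  | succ k ih => rw [iterate_succ_apply']; exact ih.step

theorem mem_Icc (h : Admissible a s) :
    s ∈ Set.Icc (-(2 * (a : ℤ)), -(5 * (a : ℤ))) (2 * (a : ℤ), 5 * (a : ℤ)) := by
  obtain ⟨hx0, hxa, hyl, hyu, -⟩ := h
  have hu : (s.1 : ℝ) * √5 = pairEval φ s - pairEval ψ s := by
    rw [pairEval, pairEval, ← goldenRatio_sub_goldenConj]; ring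
  have h5 : (2 : ℝ) < √5 := by
    rw [show (2 : ℝ) = √(2 ^ 2) by simp]; exact Real.sqrt_lt_sqrt (by norm_num) (by norm_num)
  have hφ := goldenRatio_lt_two
  have hφ1 := one_lt_goldenRatio
  have hu1 : (s.1 : ℝ) ≤ 2 * a := by nlinarith
  have hu2 : -(2 * a : ℝ) ≤ s.1 := by nlinarith
  simp only [pairEval] at hx0 hxa
  have hv1 : (s.2 : ℝ) ≤ 5 * a := by nlinarith
  have hv2 : -(5 * a : ℝ) ≤ s.2 := by nlinarith
  exact ⟨⟨by exact_mod_cast hu2, by exact_mod_cast hv2⟩,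
    by exact_mod_cast hu1, by exact_mod_cast hv1⟩

end Admissible

theorem injOn_step : Set.InjOn (step a) {s | Admissible a s} := by
  intro s hs s' hs' heq
  have hd : digit a s = digit a s' := by
    have := (hs.digit_eq_one_iff_step).trans (heq ▸ hs'.digit_eq_one_iff_step).symm
    have := digit_le_one (a := a) (s := s)
    have := digit_le_one (a := a) (s := s')
    omega
  simp only [step, Prod.ext_iff, hd] at heq
  exact Prod.ext (by omega) (by omega)

theorem finite_setOf_admissible (a : ℕ) : {s | Admissible a s}.Finite :=
  (Set.finite_Icc _ _).subset fun _ hs => Admissible.mem_Icc hs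

theorem exists_iterate_step_eq (a : ℕ) :
    ∃ Q, 0 < Q ∧ ∀ s, Admissible a s → (step a)^[Q] s = s := by
  have hmaps : Set.MapsTo (step a) {s | Admissible a s} {s | Admissible a s} :=
    fun _ hs => Admissible.step hs
  have := (finite_setOf_admissible a).to_subtype
  obtain ⟨Q, hQ, hid⟩ := ((hmaps.restrict_inj).mpr injOn_step).exists_iterate_eq_id
  refine ⟨Q, hQ, fun s hs => ?_⟩
  simpa [hmaps.iterate_restrict] using congrArg Subtype.val (congrFun hid ⟨s, hs⟩)

theorem admissible_zero_left {t : ℕ} (ht0 : 0 < t) (hta : t < a) : Admissible a (0, t) := by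
  have hψ := goldenConj_neg
  have hφ := goldenRatio_pos
  have ht : (0 : ℝ) < t := by exact_mod_cast ht0
  have hta' : (t : ℝ) < a := by exact_mod_cast hta
  simp only [Admissible, pairEval, Int.cast_zero, zero_mul, zero_add, Int.cast_natCast]
  exact ⟨ht, hta', by nlinarith, hta', fun h => absurd h (by nlinarith)⟩

/-- `(pairFib s i₀ + 1) / a` is the remainder left by the digits at positions `≥ i₀`. -/
def TailBounds (a i₀ : ℕ) : Prop :=
  ∀ s, Admissible a s → 0 < pairFib s i₀ + 1 ∧ pairFib s i₀ + 1 < a * Nat.fib i₀ ∧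
    (digit a s = 0 → pairFib s i₀ + 1 < a * Nat.fib (i₀ - 1))

theorem eventually_tailBounds (a : ℕ) : ∀ᶠ i₀ in atTop, TailBounds a i₀ := by
  refine (eventually_all_finite (finite_setOf_admissible a)).mpr fun s hs => ?_
  have hs0 : pairEval φ 0 < pairEval φ s := by simpa [pairEval] using hs.1
  have hsa : pairEval φ s < pairEval φ (0, a) := by simpa [pairEval] using hs.2.1
  have hpos : ∀ᶠ m in atTop, 0 < pairFib s m + 1 := by
    filter_upwards [eventually_pairFib_add_lt hs0 1] with m hm
    have : pairFib 0 m = 0 := by simp [pairFib]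
    omega
  have hlt : ∀ᶠ m in atTop, pairFib s m + 1 < a * Nat.fib m := by
    filter_upwards [eventually_pairFib_add_lt hsa 1] with m hm
    simpa [pairFib] using hm
  have hshift : ∀ᶠ m in atTop, digit a s = 0 → pairFib s m + 1 < a * Nat.fib (m - 1) := by
    by_cases hd : digit a s = 0
    · have hstep : pairEval φ (step a s) < pairEval φ (0, a) := by
        rw [pairEval_step goldenRatio_sq, hd]
        simpa [pairEval] using digit_eq_zero_iff.mp hd
      filter_upwards [(tendsto_sub_atTop_nat 1).eventually (eventually_pairFib_add_lt hstep 1),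
        eventually_ge_atTop 1] with m hm hm1 _
      obtain ⟨k, rfl⟩ := Nat.exists_eq_add_of_le' hm1
      rw [pairFib_succ, hd]
      simpa [pairFib] using hm
    · exact Eventually.of_forall fun _ h => absurd h hd
  filter_upwards [hpos, hlt, hshift] with m h1 h2 h3 using ⟨h1, h2, h3⟩

def tailValue (a i₀ : ℕ) (s : ℤ × ℤ) : ℕ := ((pairFib s i₀ + 1) / a).toNat

theorem mul_tailValue {i₀ : ℕ} (hpos : 0 < pairFib s i₀ + 1)
    (hdvd : (a : ℤ) ∣ pairFib s i₀ + 1) :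
    (a : ℤ) * tailValue a i₀ s = pairFib s i₀ + 1 := by
  obtain ⟨q, hq⟩ := hdvd
  have ha : (a : ℤ) ≠ 0 := by rintro h; simp [h] at hq; omega
  have hq0 : 0 ≤ q := by
    by_contra! h
    nlinarith [(Int.natCast_nonneg a)]
  rw [tailValue, hq, Int.mul_ediv_cancel_left _ ha, Int.toNat_of_nonneg hq0]

/-- `t = -F_n⁻¹ mod a`, so that `a ∣ t F_n + 1` and `a⁻¹ mod F_n = (t F_n + 1) / a`. -/
noncomputable def seed (a n : ℕ) : ℕ := a - ((Nat.fib n : ZMod a)⁻¹).val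

theorem seed_spec {n : ℕ} (ha : 1 < a) (hcop : Nat.Coprime a (Nat.fib n)) :
    0 < seed a n ∧ seed a n < a ∧ (a : ℤ) ∣ seed a n * Nat.fib n + 1 := by
  have : NeZero a := ⟨by omega⟩
  have : Fact (1 < a) := ⟨ha⟩
  set y := (Nat.fib n : ZMod a)
  have hinv : y * y⁻¹ = 1 := ZMod.mul_inv_of_unit y ((ZMod.isUnit_iff_coprime _ _).mpr hcop.symm)
  have hval : 0 < y⁻¹.val := Nat.pos_of_ne_zero fun h0 => by
    simp [(ZMod.val_eq_zero _).mp h0] at hinv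
  have hlt : y⁻¹.val < a := ZMod.val_lt _
  have hseed : seed a n = a - y⁻¹.val := rfl
  refine ⟨by omega, by omega, ?_⟩
  rw [← ZMod.intCast_zmod_eq_zero_iff_dvd]
  push_cast
  rw [hseed, Nat.cast_sub hlt.le, ZMod.natCast_self, ZMod.natCast_zmod_val]
  linear_combination -hinv

theorem exists_common_period (a : ℕ) [NeZero a] :
    ∃ M, 0 < M ∧ Periodic (seed a) M ∧
      ∀ s, Admissible a s → Periodic (fun j => (step a)^[j] s) M := by
  obtain ⟨P, hP, hfib⟩ := Nat.exists_periodic_fib_zmod a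
  obtain ⟨Q, hQ, hstep⟩ := exists_iterate_step_eq a
  have hseed : Periodic (seed a) P := fun n => congrArg (fun y : ZMod a => a - y⁻¹.val) (hfib n)
  refine ⟨Q * P, Nat.mul_pos hQ hP, hseed.nat_mul Q, fun s hs => ?_⟩
  have horbit : Periodic (fun j => (step a)^[j] s) Q := fun j => by
    simp only [iterate_add_apply, hstep s hs]
  exact mul_comm P Q ▸ horbit.nat_mul P

noncomputable def orbit (a n j : ℕ) : ℤ × ℤ := (step a)^[j] (0, seed a n)

/-- Positions are reduced modulo `M` in `ℤ` (avoiding truncated subtraction), so both digit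
families are `M`-periodic by construction. -/
noncomputable def periodicDigit (a M r j : ℕ) : ℕ :=
  digit a (orbit a r (((j : ℤ) - 1) % M).toNat)

noncomputable def tailDigit (a M i₀ i n : ℕ) : ℕ :=
  if i ∈ Nat.zeckendorf (tailValue a i₀ (orbit a n (((n : ℤ) - i₀) % M).toNat)) then 1 else 0

theorem periodicDigit_le_one (M r j : ℕ) : periodicDigit a M r j ≤ 1 := digit_le_one

theorem tailDigit_le_one (M i₀ i n : ℕ) : tailDigit a M i₀ i n ≤ 1 := by
  unfold tailDigit; split <;> omega

theorem periodic_periodicDigit (M r : ℕ) : Periodic (periodicDigit a M r) M := fun j => by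
  simp only [periodicDigit, Nat.cast_add, add_sub_right_comm, Int.add_emod_right]

theorem periodic_tailDigit {M : ℕ} (hseed : Periodic (seed a) M) (i₀ i : ℕ) :
    Periodic (tailDigit a M i₀ i) M := fun n => by
  simp only [tailDigit, orbit, hseed n, Nat.cast_add, add_sub_right_comm, Int.add_emod_right]
  rfl

section Representation

variable {a M i₀ n : ℕ}

theorem admissible_orbit (ha : 1 < a) (hcop : Nat.Coprime a (Nat.fib n)) (j : ℕ) :
    Admissible a (orbit a n j) :=
  (admissible_zero_left (seed_spec ha hcop).1 (seed_spec ha hcop).2.1).iterate j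

theorem orbit_toNat_emod (hstate : ∀ s, Admissible a s → Periodic (fun j => (step a)^[j] s) M)
    (ha : 1 < a) (hcop : Nat.Coprime a (Nat.fib n)) (k : ℕ) :
    orbit a n (((k : ℤ) % M).toNat) = orbit a n k := by
  rw [← Int.natCast_mod, Int.toNat_natCast]
  exact (hstate _ (admissible_orbit ha hcop 0)).map_mod_nat k

theorem periodicDigit_mod_eq (hseed : Periodic (seed a) M)
    (hstate : ∀ s, Admissible a s → Periodic (fun j => (step a)^[j] s) M)
    (ha : 1 < a) (hcop : Nat.Coprime a (Nat.fib n)) {j : ℕ} (hj : 1 ≤ j) :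
    periodicDigit a M (n % M) j = digit a (orbit a n (j - 1)) := by
  rw [periodicDigit, show (j : ℤ) - 1 = ((j - 1 : ℕ) : ℤ) by omega, orbit, hseed.map_mod_nat,
    ← orbit, orbit_toNat_emod hstate ha hcop]

theorem tailDigit_eq (hstate : ∀ s, Admissible a s → Periodic (fun j => (step a)^[j] s) M)
    (ha : 1 < a) (hcop : Nat.Coprime a (Nat.fib n)) (hn : i₀ ≤ n) (i : ℕ) :
    tailDigit a M i₀ i n =
      if i ∈ Nat.zeckendorf (tailValue a i₀ (orbit a n (n - i₀))) then 1 else 0 := by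
  rw [tailDigit, show (n : ℤ) - i₀ = ((n - i₀ : ℕ) : ℤ) by omega, orbit_toNat_emod hstate ha hcop]

theorem seed_mul_fib_eq (hn : i₀ ≤ n) :
    (seed a n * Nat.fib n : ℤ) =
      a * ((∑ i ∈ Ico i₀ n, digit a (orbit a n (n - i - 1)) * Nat.fib i : ℕ) : ℤ) +
        pairFib (orbit a n (n - i₀)) i₀ := by
  have h := pairFib_eq_sum_add (a := a) (0, (seed a n : ℤ)) hn
  rw [pairFib_zero_left] at h
  exact h

theorem mul_tailValue_orbit (ha : 1 < a) (hB : TailBounds a i₀)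
    (hcop : Nat.Coprime a (Nat.fib n)) (hn : i₀ ≤ n) :
    (a : ℤ) * tailValue a i₀ (orbit a n (n - i₀)) = pairFib (orbit a n (n - i₀)) i₀ + 1 := by
  refine mul_tailValue (hB _ (admissible_orbit ha hcop _)).1 ?_
  rw [eq_sub_of_add_eq' (seed_mul_fib_eq hn).symm, sub_add_eq_add_sub]
  exact dvd_sub (seed_spec ha hcop).2.2 (dvd_mul_right _ _)

theorem seed_mul_fib_add_one (ha : 1 < a) (hB : TailBounds a i₀)
    (hcop : Nat.Coprime a (Nat.fib n)) (hn : i₀ ≤ n) :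
    seed a n * Nat.fib n + 1 = a * (∑ i ∈ Ico i₀ n, digit a (orbit a n (n - i - 1)) * Nat.fib i +
      tailValue a i₀ (orbit a n (n - i₀))) := by
  have := seed_mul_fib_eq (a := a) hn
  zify
  rw [mul_add, mul_tailValue_orbit ha hB hcop hn]
  push_cast at this
  linarith

theorem tailValue_orbit_lt (ha : 1 < a) (hB : TailBounds a i₀)
    (hcop : Nat.Coprime a (Nat.fib n)) (hn : i₀ ≤ n) :
    tailValue a i₀ (orbit a n (n - i₀)) < Nat.fib i₀ ∧
      (digit a (orbit a n (n - i₀)) = 0 →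
        tailValue a i₀ (orbit a n (n - i₀)) < Nat.fib (i₀ - 1)) := by
  have htail := mul_tailValue_orbit ha hB hcop hn
  obtain ⟨-, hlt, hlt'⟩ := hB _ (admissible_orbit ha hcop (n - i₀))
  have ha0 : (0 : ℤ) < a := by omega
  exact ⟨by have := htail ▸ hlt; exact_mod_cast lt_of_mul_lt_mul_left this ha0.le,
    fun hd => by have := htail ▸ hlt' hd; exact_mod_cast lt_of_mul_lt_mul_left this ha0.le⟩

theorem invMod_fib_eq (hseed : Periodic (seed a) M)
    (hstate : ∀ s, Admissible a s → Periodic (fun j => (step a)^[j] s) M)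
    (ha : 1 < a) (hB : TailBounds a i₀) (hcop : Nat.Coprime a (Nat.fib n)) (hn : i₀ + 3 ≤ n) :
    invMod a (Nat.fib n) =
      (∑ i ∈ Icc i₀ (n - 1), periodicDigit a M (n % M) (n - i) * Nat.fib i) +
        ∑ i ∈ Icc 1 (i₀ - 1), tailDigit a M i₀ i n * Nat.fib i := by
  have hhigh : ∑ i ∈ Icc i₀ (n - 1), periodicDigit a M (n % M) (n - i) * Nat.fib i =
      ∑ i ∈ Ico i₀ n, digit a (orbit a n (n - i - 1)) * Nat.fib i := by
    rw [show Icc i₀ (n - 1) = Ico i₀ n by ext; simp only [mem_Icc, mem_Ico]; omega]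
    refine sum_congr rfl fun i hi => ?_
    rw [periodicDigit_mod_eq hseed hstate ha hcop (by simp at hi; omega)]
  have hlow : ∑ i ∈ Icc 1 (i₀ - 1), tailDigit a M i₀ i n * Nat.fib i =
      tailValue a i₀ (orbit a n (n - i₀)) := by
    simp only [tailDigit_eq hstate ha hcop (by omega : i₀ ≤ n)]
    exact Nat.sum_indicator_zeckendorf_mul_fib (tailValue_orbit_lt ha hB hcop (by omega)).1
  rw [hhigh, hlow]
  exact invMod_eq_of_mul_eq ((by decide : 1 < Nat.fib 3).trans_le (Nat.fib_mono (by omega)))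
    (seed_spec ha hcop).2.1 (seed_mul_fib_add_one ha hB hcop (by omega)).symm

theorem digit_mul_digit_succ_eq_zero (hseed : Periodic (seed a) M)
    (hstate : ∀ s, Admissible a s → Periodic (fun j => (step a)^[j] s) M)
    (ha : 1 < a) (hB : TailBounds a i₀) (hcop : Nat.Coprime a (Nat.fib n)) (hn : i₀ ≤ n)
    {i : ℕ} (hi : 1 ≤ i) (hin : i + 1 ≤ n - 1) :
    (if i < i₀ then tailDigit a M i₀ i n else periodicDigit a M (n % M) (n - i)) *
      (if i + 1 < i₀ then tailDigit a M i₀ (i + 1) n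
        else periodicDigit a M (n % M) (n - (i + 1))) = 0 := by
  have hno11 (j : ℕ) : digit a (orbit a n (j + 1)) * digit a (orbit a n j) = 0 := by
    rw [orbit, iterate_succ_apply']
    exact (admissible_orbit ha hcop j).digit_step_mul_digit_eq_zero
  rcases lt_trichotomy (i + 1) i₀ with h | rfl | h
  · rw [if_pos (by omega), if_pos h, tailDigit_eq hstate ha hcop hn, tailDigit_eq hstate ha hcop hn]
    by_cases hmem : i ∈ Nat.zeckendorf (tailValue a i₀ (orbit a n (n - i₀)))
    · rw [if_neg (Nat.add_one_notMem_zeckendorf hmem), mul_zero]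
    · rw [if_neg hmem, zero_mul]
  · rw [if_pos (by omega), if_neg (lt_irrefl _), tailDigit_eq hstate ha hcop (by omega),
      periodicDigit_mod_eq hseed hstate ha hcop (by omega)]
    have hJ := hno11 (n - (i + 1) - 1)
    rw [show n - (i + 1) - 1 + 1 = n - (i + 1) by omega] at hJ
    rcases mul_eq_zero.mp hJ with hd | hd
    · have hlt := (tailValue_orbit_lt ha hB hcop (by omega)).2 hd
      rw [if_neg fun hmem => (Nat.lt_of_mem_zeckendorf hlt hmem).ne (by omega), zero_mul]
    · rw [hd, mul_zero]
  · rw [if_neg (by omega), if_neg (by omega), periodicDigit_mod_eq hseed hstate ha hcop (by omega),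
      periodicDigit_mod_eq hseed hstate ha hcop (by omega),
      show n - i - 1 = n - (i + 1) - 1 + 1 by omega]
    exact hno11 _

end Representation

end GoldenExpansion

open GoldenExpansion

theorem stmt12 (a : ℕ) (ha : 3 ≤ a) :
    ∃ M n₀ i₀ : ℕ, 1 ≤ M ∧ 1 ≤ n₀ ∧ 1 ≤ i₀ ∧
      ∃ z w : ℕ → ℕ → ℕ,
        (∀ r j, z r j ≤ 1) ∧ (∀ i n, w i n ≤ 1) ∧
        (∀ r, ∃ p, 0 < p ∧ ∀ j, z r (j + p) = z r j) ∧
        (∀ i, ∃ p, 0 < p ∧ ∀ n, w i (n + p) = w i n) ∧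
        ∀ n, n₀ ≤ n → Nat.gcd a (Nat.fib n) = 1 →
          invMod a (Nat.fib n) =
            (∑ i ∈ Finset.Icc i₀ (n - 1), z (n % M) (n - i) * Nat.fib i) +
              ∑ i ∈ Finset.Icc 1 (i₀ - 1), w i n * Nat.fib i ∧
          -- the digits form a Zeckendorf representation: no two consecutive ones
          ∀ i, 1 ≤ i → i + 1 ≤ n - 1 →
            (if i < i₀ then w i n else z (n % M) (n - i)) *
              (if i + 1 < i₀ then w (i + 1) n else z (n % M) (n - (i + 1))) = 0 := by
  have ha1 : 1 < a := by omega
  have : NeZero a := ⟨by omega⟩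
  obtain ⟨M, hM, hseed, hstate⟩ := exists_common_period a
  obtain ⟨i₀, hi₀, hB⟩ := ((eventually_ge_atTop 1).and (eventually_tailBounds a)).exists
  refine ⟨M, i₀ + 3, i₀, hM, by omega, hi₀, periodicDigit a M, tailDigit a M i₀,
    periodicDigit_le_one M, tailDigit_le_one M i₀,
    fun r => ⟨M, hM, periodic_periodicDigit M r⟩,
    fun i => ⟨M, hM, periodic_tailDigit hseed i₀ i⟩, fun n hn hcop => ⟨?_, fun i hi hin => ?_⟩⟩
  · exact invMod_fib_eq hseed hstate ha1 hB hcop hn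
  · exact digit_mul_digit_succ_eq_zero hseed hstate ha1 hB hcop (by omega) hi hin
end

section
/- For every integer n ≥ 8 with n ≡ 2 (mod 3), we have (2^{-1} mod F_n) = ∑_{k=0}^{(n-8)/3} F_{n-3k-2} + F_4. -/
theorem invMod_eq_of_mul_eq_add_one {a b m : ℕ} (ha : 1 < a) (h : a * b = m + 1) :
    invMod a m = b := by
  have hb : b ∈ {c | 0 < c ∧ a * c % m = 1 % m} :=
    ⟨Nat.pos_of_mul_pos_left (a := a) (by omega), by rw [h, Nat.add_mod_left]⟩
  refine le_antisymm (Nat.sInf_le hb) (le_csInf ⟨b, hb⟩ ?_)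
  rintro c ⟨hc, hmod⟩
  by_contra! hcb
  have hac : a * c ≤ m := by
    have := Nat.mul_lt_mul_of_pos_left hcb (by omega : 0 < a)
    omega
  have hac2 : 2 ≤ a * c := le_trans ha (Nat.le_mul_of_pos_right a hc)
  rcases hac.lt_or_eq with hlt | heq
  · rw [Nat.mod_eq_of_lt hlt, Nat.mod_eq_of_lt (by omega)] at hmod
    omega
  · rw [heq, Nat.mod_self, Nat.mod_eq_of_lt (by omega)] at hmod
    omega

theorem Nat.two_mul_sum_fib_three_mul_add_add_fib (j m : ℕ) :
    2 * ∑ k ∈ Finset.range m, fib (3 * k + j + 1) + fib j = fib (3 * m + j) := by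
  induction m with
  | zero => simp
  | succ m ih =>
    have h₁ : fib (3 * m + j + 2) = fib (3 * m + j) + fib (3 * m + j + 1) := fib_add_two
    have h₂ : fib (3 * (m + 1) + j) = fib (3 * m + j + 1) + fib (3 * m + j + 2) := by
      rw [show 3 * (m + 1) + j = 3 * m + j + 1 + 2 by ring, fib_add_two]
    rw [Finset.sum_range_succ]
    omega

theorem stmt14 (n : ℕ) (hn : 8 ≤ n) (h3 : n % 3 = 2) :
    invMod 2 (Nat.fib n) =
      (∑ k ∈ Finset.range ((n - 8) / 3 + 1), Nat.fib (n - 3 * k - 2)) +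
        Nat.fib 4 := by
  set m := (n - 8) / 3 + 1
  have hreflect : ∑ k ∈ Finset.range m, Nat.fib (n - 3 * k - 2) =
      ∑ k ∈ Finset.range m, Nat.fib (3 * k + 5 + 1) := by
    rw [← Finset.sum_range_reflect]
    refine Finset.sum_congr rfl fun k hk => ?_
    rw [Finset.mem_range] at hk
    congr 1
    omega
  apply invMod_eq_of_mul_eq_add_one one_lt_two
  have htelescope := Nat.two_mul_sum_fib_three_mul_add_add_fib 5 m
  rw [show 3 * m + 5 = n by omega] at htelescope
  rw [hreflect, mul_add, ← htelescope]
  simp [Nat.fib_add_two]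
end

section
/- For integers a ≥ 3 and n with φ^n ≥ 2a, letting r = n mod π(a), b_r = (-F_r^{-1} mod a), x_r = b_r/a, and y_n = √5/a − x_r·(−φ)^{−n}, we have y_n ∈ (0,1) and x_r + y_n·φ^{−n} ∈ (0,1), and (a^{-1} mod F_n) = (x_r + y_n·φ^{−n})·φ^n/√5. -/
open Real goldenRatio

/-!
The Fibonacci step `(u, v) ↦ (v, u + v)` is a permutation of `(ℤ/a)²`, so it has finite order and
the Pisano period exists; hence `F_n ≡ F_r (mod a)` and `a ∣ b F_n + 1`. Because `b < a`, the
quotient `c = (b F_n + 1) / a` satisfies `0 < c < F_n`, so it is the least inverse of `a` modulo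
`F_n`, and Binet's formula rewrites it as `(x + y φ⁻ⁿ) φⁿ / √5`. The interval bounds only use
`|ψⁿ| = φ⁻ⁿ ≤ 1 / (2a)` and `√5 + 1 / 2 < 3 ≤ a`.
-/

open Function

def fibStep (a : ℕ) : Equiv.Perm (ZMod a × ZMod a) where
  toFun p := (p.2, p.1 + p.2)
  invFun p := (p.2 - p.1, p.1)
  left_inv p := by simp
  right_inv p := by simp

lemma fibStep_pow_apply (a n : ℕ) :
    (fibStep a ^ n) (0, 1) = ((Nat.fib n : ZMod a), (Nat.fib (n + 1) : ZMod a)) := by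
  induction n with
  | zero => simp
  | succ n ih =>
    rw [pow_succ', Equiv.Perm.mul_apply, ih, Nat.fib_add_two]
    simp [fibStep]

lemma periodic_fib_mod_orderOf_fibStep (a : ℕ) :
    Periodic (fun n => Nat.fib n % a) (orderOf (fibStep a)) := fun n => by
  have h := congrArg (fun σ : Equiv.Perm _ => (σ (0, 1)).1)
    (pow_add (fibStep a) n (orderOf (fibStep a)))
  simp only [pow_orderOf_eq_one, mul_one, fibStep_pow_apply] at h
  exact (ZMod.natCast_eq_natCast_iff' _ _ _).mp h

lemma periodic_fib_mod_pisano {a : ℕ} (ha : 0 < a) :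
    Periodic (fun n => Nat.fib n % a) (pisano a) :=
  have : NeZero a := ⟨ha.ne'⟩
  (Nat.sInf_mem (s := {k | 0 < k ∧ Periodic (fun n => Nat.fib n % a) k})
    ⟨_, orderOf_pos (fibStep a), periodic_fib_mod_orderOf_fibStep a⟩).2

lemma fib_mod_pisano_modEq {a : ℕ} (ha : 0 < a) (n : ℕ) :
    Nat.fib (n % pisano a) ≡ Nat.fib n [MOD a] :=
  (periodic_fib_mod_pisano ha).map_mod_nat n

lemma invMod_eq_of_lt {a m c : ℕ} (hcop : a.Coprime m) (hc : 0 < c) (hcm : c < m)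
    (hac : a * c % m = 1 % m) : invMod a m = c := by
  have hmem : c ∈ {d | 0 < d ∧ a * d % m = 1 % m} := ⟨hc, hac⟩
  refine le_antisymm (Nat.sInf_le hmem) ?_
  obtain ⟨-, hd⟩ := Nat.sInf_mem ⟨c, hmem⟩
  have hdc : invMod a m ≡ c [MOD m] :=
    Nat.ModEq.cancel_left_of_coprime (Nat.coprime_comm.mp hcop) (hd.trans hac.symm)
  calc c = c % m := (Nat.mod_eq_of_lt hcm).symm
    _ = invMod a m % m := hdc.symm
    _ ≤ invMod a m := Nat.mod_le _ _

lemma invMod_eq_div {a b m : ℕ} (hcop : a.Coprime m) (hba : b < a) (hm : 2 ≤ m)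
    (hdvd : a ∣ b * m + 1) : invMod a m = (b * m + 1) / a := by
  obtain ⟨c, hc⟩ := hdvd
  rw [hc, Nat.mul_div_cancel_left _ (by omega)]
  refine invMod_eq_of_lt hcop ?_ ?_ ?_
  · exact Nat.pos_of_ne_zero (by rintro rfl; simp at hc)
  · refine Nat.lt_of_mul_lt_mul_left (a := a) ?_
    rw [← hc]
    nlinarith [Nat.mul_le_mul_right m (Nat.succ_le_of_lt hba)]
  · rw [← hc, Nat.add_mod, Nat.mul_mod_left, zero_add, Nat.mod_mod]

lemma two_le_fib_of_three_le_goldenRatio_pow {n : ℕ} (h : 3 ≤ φ ^ n) : 2 ≤ Nat.fib n := by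
  have hn : 2 < n := by
    refine (pow_lt_pow_iff_right₀ one_lt_goldenRatio).mp ?_
    linarith [goldenRatio_sq, goldenRatio_lt_two]
  exact Nat.fib_mono hn

lemma abs_goldenConj_pow (n : ℕ) : |ψ ^ n| = φ⁻¹ ^ n := by
  rw [abs_pow, abs_of_neg goldenConj_neg, inv_goldenRatio]

lemma inv_neg_goldenRatio : (-φ)⁻¹ = ψ := by
  rw [inv_neg, inv_goldenRatio, neg_neg]

lemma goldenRatio_pow_mul_sqrt_five_div {a b : ℝ} (n : ℕ) :
    (b / a + (√5 / a - b / a * ψ ^ n) * φ⁻¹ ^ n) * φ ^ n / √5 = (b * Nat.fib n + 1) / a := by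
  have h5 : √5 ≠ 0 := by positivity
  rw [Real.coe_fib_eq, inv_pow]
  field_simp
  ring

lemma sqrt_five_div_sub_mem_Ioo {a b t : ℝ} (ha : 3 ≤ a) (hb : 0 ≤ b) (hba : b ≤ a)
    (ht : |t| ≤ 1 / (2 * a)) : √5 / a - b / a * t ∈ Set.Ioo 0 1 := by
  have h5 : 2 < √5 ∧ √5 < 5 / 2 := by
    constructor <;> [rw [Real.lt_sqrt]; rw [Real.sqrt_lt']] <;> norm_num
  have hbt : |b / a * t| ≤ 1 / (2 * a) := by
    rw [abs_mul, abs_of_nonneg (by positivity)]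
    calc b / a * |t| ≤ 1 * (1 / (2 * a)) := by
          gcongr
          exact (div_le_one (by linarith)).mpr hba
      _ = 1 / (2 * a) := one_mul _
  obtain ⟨hlo, hhi⟩ := abs_le.mp hbt
  constructor
  · have : 1 / (2 * a) < √5 / a := by
      rw [div_lt_div_iff₀ (by positivity) (by positivity)]; nlinarith
    linarith
  · have : √5 / a + 1 / (2 * a) < 1 := by
      rw [div_add_div _ _ (by positivity) (by positivity), div_lt_one (by positivity)]; nlinarith
    linarith

lemma div_add_mul_mem_Ioo {a b y t : ℝ} (hb : 0 ≤ b) (hba : b + 1 ≤ a) (hy : y ∈ Set.Ioo 0 1)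
    (ht : 0 < t) (hta : t ≤ 1 / (2 * a)) : b / a + y * t ∈ Set.Ioo 0 1 := by
  have ha : 0 < a := by linarith
  constructor
  · have := hy.1; positivity
  · have hyt : y * t < 1 / a := by
      calc y * t < 1 * (1 / (2 * a)) := mul_lt_mul hy.2 hta ht zero_le_one
        _ ≤ 1 / a := by rw [one_mul]; gcongr; linarith
    calc b / a + y * t < (a - 1) / a + 1 / a := add_lt_add_of_le_of_lt (by gcongr; linarith) hyt
      _ = 1 := by field_simp; ring

theorem stmt16_general (a n : ℕ) (ha : 3 ≤ a) (hφ : 2 * (a : ℝ) ≤ φ ^ n)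
    (h : Nat.gcd a (Nat.fib n) = 1)
    (b : ℕ) (hba : b < a)
    (hbr : (b * Nat.fib (n % pisano a) + 1) % a = 0)
    (x y : ℝ) (hx : x = (b : ℝ) / a)
    (hy : y = Real.sqrt 5 / a - x * (-φ)⁻¹ ^ n) :
    y ∈ Set.Ioo (0 : ℝ) 1 ∧ x + y * φ⁻¹ ^ n ∈ Set.Ioo (0 : ℝ) 1 ∧
      (invMod a (Nat.fib n) : ℝ) = (x + y * φ⁻¹ ^ n) * φ ^ n / Real.sqrt 5 := by
  have haR : (3 : ℝ) ≤ a := by exact_mod_cast ha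
  have hbaR : (b : ℝ) + 1 ≤ a := by exact_mod_cast hba
  have hsmall : φ⁻¹ ^ n ≤ 1 / (2 * a) := by
    rw [inv_pow, one_div]
    exact inv_anti₀ (by positivity) hφ
  have hy01 : y ∈ Set.Ioo 0 1 := by
    rw [hy, hx, inv_neg_goldenRatio]
    exact sqrt_five_div_sub_mem_Ioo haR b.cast_nonneg (by linarith)
      ((abs_goldenConj_pow n).trans_le hsmall)
  have hdvd : a ∣ b * Nat.fib n + 1 :=
    Nat.dvd_of_mod_eq_zero (((fib_mod_pisano_modEq (by omega : 0 < a) n).mul_left b).add_right 1 ▸ hbr)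
  have hfib : 2 ≤ Nat.fib n := two_le_fib_of_three_le_goldenRatio_pow (by linarith)
  refine ⟨hy01, hx ▸ div_add_mul_mem_Ioo b.cast_nonneg hbaR hy01 (by positivity) hsmall, ?_⟩
  rw [invMod_eq_div h hba hfib hdvd, Nat.cast_div hdvd (by positivity), hy, hx,
    inv_neg_goldenRatio, goldenRatio_pow_mul_sqrt_five_div]
  push_cast
  rfl

theorem stmt16 (a n : ℕ) (ha : 3 ≤ a) (hφ : 2 * (a : ℝ) ≤ φ ^ n)
    (h : Nat.gcd a (Nat.fib n) = 1)
    (b : ℕ) (hb1 : 1 ≤ b) (hba : b < a)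
    (hbr : (b * Nat.fib (n % pisano a) + 1) % a = 0)
    (x y : ℝ) (hx : x = (b : ℝ) / a)
    (hy : y = Real.sqrt 5 / a - x * (-φ)⁻¹ ^ n) :
    y ∈ Set.Ioo (0 : ℝ) 1 ∧ x + y * φ⁻¹ ^ n ∈ Set.Ioo (0 : ℝ) 1 ∧
      (invMod a (Nat.fib n) : ℝ) = (x + y * φ⁻¹ ^ n) * φ ^ n / Real.sqrt 5 :=
  stmt16_general a n ha hφ h b hba hbr x y hx hy
end
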